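/- arXiv:0812.2725 — 3 statements merged into one kernel-verified Lean document; each statement's English description precedes it below -/
import Mathlib

section
/- For every nonnegative integer k and every positive integer n, the joint distribution of k-distant crossings and k-distant nestings over set partitions of [n] is symmetric: the sum over partitions π of [n] of x^{dcr_k(π)} y^{dne_k(π)} equals the sum of x^{dne_k(π)} y^{dcr_k(π)}. -/
open Finset

/-- Set partitions of `[n] = {1, …, n}`. -/
abbrev SP (n : ℕ) := Finpartition (Finset.Icc 1 n)

/-- `(i, j)` is an edge of the diagram of the partition `P`: either a loop `(i, i)`
on a singleton block, or `i < j` are in a common block with no element of that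
block strictly between them. -/
def IsEdge {n : ℕ} (P : SP n) (i j : ℕ) : Prop :=
  (i = j ∧ {i} ∈ P.parts) ∨
  (i < j ∧ ∃ B ∈ P.parts, i ∈ B ∧ j ∈ B ∧ ∀ m ∈ B, ¬(i < m ∧ m < j))

/-- Two edges `e₁ = (i₁, j₁)` and `e₂ = (i₂, j₂)` form a `k`-distant crossing:
`i₁ < i₂ ≤ j₁ < j₂` and `j₁ - i₂ ≥ k`. -/
def CrossPair (k : ℕ) (e₁ e₂ : ℕ × ℕ) : Prop :=
  e₁.1 < e₂.1 ∧ e₂.1 ≤ e₁.2 ∧ e₁.2 < e₂.2 ∧ k ≤ e₁.2 - e₂.1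

/-- Two edges `e₁ = (i₁, j₁)` and `e₂ = (i₂, j₂)` form a `k`-distant nesting:
`i₁ < i₂ ≤ j₂ < j₁` and `j₂ - i₂ ≥ k`. -/
def NestPair (k : ℕ) (e₁ e₂ : ℕ × ℕ) : Prop :=
  e₁.1 < e₂.1 ∧ e₂.1 ≤ e₂.2 ∧ e₂.2 < e₁.2 ∧ k ≤ e₂.2 - e₂.1

/-- The number of `k`-distant crossings of the partition `P`. -/
noncomputable def dcr {n : ℕ} (k : ℕ) (P : SP n) : ℕ :=
  Set.ncard {p : (ℕ × ℕ) × ℕ × ℕ |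
    IsEdge P p.1.1 p.1.2 ∧ IsEdge P p.2.1 p.2.2 ∧ CrossPair k p.1 p.2}

/-- The number of `k`-distant nestings of the partition `P`. -/
noncomputable def dne {n : ℕ} (k : ℕ) (P : SP n) : ℕ :=
  Set.ncard {p : (ℕ × ℕ) × ℕ × ℕ |
    IsEdge P p.1.1 p.1.2 ∧ IsEdge P p.2.1 p.2.2 ∧ NestPair k p.1 p.2}

/-- `P` is a complete matching: every block has exactly two elements. -/
def IsMatching {n : ℕ} (P : SP n) : Prop := ∀ B ∈ P.parts, B.card = 2

/-- The number of `k`-distant noncrossing complete matchings of `[m]`. -/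
noncomputable def NCM (k m : ℕ) : ℕ :=
  Set.ncard {P : SP m | IsMatching P ∧ dcr k P = 0}

/-- The number of `k`-distant noncrossing partitions of `[n]`. -/
noncomputable def NCP (k n : ℕ) : ℕ :=
  Set.ncard {P : SP n | dcr k P = 0}

/-- Openers of `P`: minimal elements of blocks of size at least two. -/
def openers {n : ℕ} (P : SP n) : Set ℕ :=
  {v | ∃ B ∈ P.parts, v ∈ B ∧ 2 ≤ B.card ∧ ∀ m ∈ B, v ≤ m}

/-- Closers of `P`: maximal elements of blocks of size at least two. -/
def closers {n : ℕ} (P : SP n) : Set ℕ :=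
  {v | ∃ B ∈ P.parts, v ∈ B ∧ 2 ≤ B.card ∧ ∀ m ∈ B, m ≤ v}

/-- Singletons of `P`. -/
def singletons {n : ℕ} (P : SP n) : Set ℕ := {v | {v} ∈ P.parts}

/-- Transients of `P`: elements of a block that are neither its minimum nor its
maximum (equivalently, vertices incident to two edges of the diagram). -/
def transients {n : ℕ} (P : SP n) : Set ℕ :=
  {v | ∃ B ∈ P.parts, v ∈ B ∧ (∃ m ∈ B, m < v) ∧ (∃ m ∈ B, v < m)}

/-!
Scan the diagram of a partition from left to right. When the right end `j` of an edge `(h, j)` is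
reached, `h` is one of the left ends still open at `j`; call an open left end far if it lies at
distance at least `k` before `j`. If `h` is far, `(h, j)` is the first edge of as many `k`-distant
crossings as there are far open left ends above `h`, and the inner edge of as many `k`-distant
nestings as there are open left ends below `h`; if `h` is near, it is in neither. Building a
second diagram along the same scan, closing `j` at the far open left end of reversed rank (and at
`h` itself when `h` is near), therefore exchanges the two statistics. The open left ends of the two
diagrams stay equal near `j` and equinumerous far from it, which keeps the construction well
defined and makes it an involution.
-/

open scoped Classical

namespace Finpartition

variable {α : Type*} [DecidableEq α] {s : Finset α} (P : Finpartition s)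

theorem singleton_mem_parts_iff {a : α} : {a} ∈ P.parts ↔ P.part a = {a} := by
  refine ⟨fun h => P.part_eq_of_mem h (mem_singleton_self a), fun h => ?_⟩
  have ha : a ∈ s := P.mem_part_self.1 (by rw [h]; exact mem_singleton_self a)
  exact h ▸ P.part_mem.2 ha

theorem exists_mem_parts_mem_mem_iff {a b : α} {q : Finset α → Prop} :
    (∃ B ∈ P.parts, a ∈ B ∧ b ∈ B ∧ q B) ↔ b ∈ P.part a ∧ q (P.part a) := by
  constructor
  · rintro ⟨B, hB, ha, hb, hq⟩
    rw [P.part_eq_of_mem hB ha]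
    exact ⟨hb, hq⟩
  · rintro ⟨hb, hq⟩
    have ha : a ∈ s := P.part_nonempty.1 ⟨b, hb⟩
    exact ⟨P.part a, P.part_mem.2 ha, P.mem_part ha, hb, hq⟩

theorem part_eq_part_of_mem {a b : α} (h : b ∈ P.part a) : P.part b = P.part a :=
  P.part_eq_of_mem (P.part_mem.2 (P.part_nonempty.1 ⟨b, h⟩)) h

theorem mem_part_comm {a b : α} : b ∈ P.part a ↔ a ∈ P.part b := by
  simp only [mem_part_iff_exists]
  exact ⟨fun ⟨B, hB, hb, ha⟩ => ⟨B, hB, ha, hb⟩, fun ⟨B, hB, ha, hb⟩ => ⟨B, hB, hb, ha⟩⟩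

theorem parts_eq_image_part : P.parts = s.image P.part := by
  ext B
  refine ⟨fun hB => ?_, fun hB => ?_⟩
  · obtain ⟨a, ha, rfl⟩ := P.part_surjOn hB
    exact mem_image_of_mem _ ha
  · obtain ⟨a, ha, rfl⟩ := mem_image.1 hB
    exact P.part_mem.2 ha

theorem ext_part {Q : Finpartition s} (h : ∀ a, P.part a = Q.part a) : P = Q := by
  ext B
  rw [P.parts_eq_image_part, Q.parts_eq_image_part, funext h]

end Finpartition

namespace Finset

variable {F : Finset ℕ}

theorem toFinset_ofPred_mem (hf : (Set.ofPred (· ∈ F)).Finite) : hf.toFinset = F := by simp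

theorem nth_mem_of_lt_card {r : ℕ} (hr : r < #F) : Nat.nth (· ∈ F) r ∈ F :=
  Nat.nth_mem_of_lt_card (p := (· ∈ F)) F.finite_toSet (by rwa [toFinset_ofPred_mem])

theorem count_nth_of_lt_card {r : ℕ} (hr : r < #F) : Nat.count (· ∈ F) (Nat.nth (· ∈ F) r) = r :=
  Nat.count_nth_of_lt_card_finite (p := (· ∈ F)) F.finite_toSet (by rwa [toFinset_ofPred_mem])

theorem count_lt_card {h : ℕ} (hh : h ∈ F) : Nat.count (· ∈ F) h < #F := by
  simpa only [toFinset_ofPred_mem] using Nat.count_lt_card (p := (· ∈ F)) F.finite_toSet hh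

theorem count_eq_card_filter_lt (h : ℕ) : Nat.count (· ∈ F) h = #(F.filter (· < h)) := by
  rw [Nat.count_eq_card_filter_range]
  congr 1
  ext i
  simp [and_comm]

theorem card_filter_gt {h : ℕ} (hh : h ∈ F) :
    #(F.filter (h < ·)) = #F - 1 - Nat.count (· ∈ F) h := by
  rw [count_eq_card_filter_lt]
  have hsplit := card_filter_add_card_filter_not (s := F.erase h) (· < h)
  have hlt : (F.erase h).filter (· < h) = F.filter (· < h) := by
    ext i; simp only [mem_filter, mem_erase]
    exact ⟨fun ⟨⟨_, hi⟩, hlt⟩ => ⟨hi, hlt⟩, fun ⟨hi, hlt⟩ => ⟨⟨hlt.ne, hi⟩, hlt⟩⟩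
  have hgt : (F.erase h).filter (¬· < h) = F.filter (h < ·) := by
    ext i; simp only [mem_filter, mem_erase]
    exact ⟨fun ⟨⟨hne, hi⟩, hge⟩ => ⟨hi, by omega⟩, fun ⟨hi, hgt⟩ => ⟨⟨hgt.ne', hi⟩, by omega⟩⟩
  rw [hlt, hgt, card_erase_of_mem hh] at hsplit
  omega

end Finset

theorem isEdge_iff {n : ℕ} (P : SP n) {i j : ℕ} :
    IsEdge P i j ↔ (i = j ∧ P.part i = {i}) ∨
      (i < j ∧ j ∈ P.part i ∧ ∀ m ∈ P.part i, ¬(i < m ∧ m < j)) := by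
  unfold IsEdge
  rw [P.singleton_mem_parts_iff, P.exists_mem_parts_mem_mem_iff]

/-- The edge sets of set partitions of `[n]`, a loop `(i, i)` standing for a singleton block. -/
structure IsDiagram (n : ℕ) (E : Finset (ℕ × ℕ)) : Prop where
  bounds : ∀ p ∈ E, 1 ≤ p.1 ∧ p.1 ≤ p.2 ∧ p.2 ≤ n
  injOn_fst : Set.InjOn Prod.fst (E : Set (ℕ × ℕ))
  injOn_snd : Set.InjOn Prod.snd (E : Set (ℕ × ℕ))
  cover : ∀ v ∈ Icc 1 n, (∃ j, (v, j) ∈ E) ∨ ∃ i, (i, v) ∈ E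

def Arc (E : Finset (ℕ × ℕ)) (a b : ℕ) : Prop := (a, b) ∈ E ∧ a < b

def Linked (E : Finset (ℕ × ℕ)) (a b : ℕ) : Prop :=
  Relation.ReflTransGen (Arc E) a b ∨ Relation.ReflTransGen (Arc E) b a

theorem le_of_reflTransGen_arc {E : Finset (ℕ × ℕ)} {a b : ℕ}
    (h : Relation.ReflTransGen (Arc E) a b) : a ≤ b := by
  induction h with
  | refl => exact le_rfl
  | tail _ hbc ih => exact ih.trans hbc.2.le

namespace IsDiagram

variable {n : ℕ} {E : Finset (ℕ × ℕ)} (hE : IsDiagram n E)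
include hE

theorem snd_eq {i j j' : ℕ} (h : (i, j) ∈ E) (h' : (i, j') ∈ E) : j = j' :=
  congrArg Prod.snd (hE.injOn_fst h h' rfl)

theorem fst_eq {i i' j : ℕ} (h : (i, j) ∈ E) (h' : (i', j) ∈ E) : i = i' :=
  congrArg Prod.fst (hE.injOn_snd h h' rfl)

theorem linked_of_mem {a b : ℕ} (h : (a, b) ∈ E) : Linked E a b := by
  have hab : a ≤ b := (hE.bounds _ h).2.1
  rcases hab.lt_or_eq with hab | rfl
  · exact Or.inl (.single ⟨h, hab⟩)
  · exact Or.inl .refl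

theorem linked_equivalence : Equivalence (Linked E) where
  refl _ := Or.inl .refl
  symm h := h.symm
  trans {a b c} hab hbc := by
    have hR : Relator.RightUnique (Arc E) := fun _ _ _ h h' => hE.snd_eq h.1 h'.1
    have hL : Relator.RightUnique (Function.swap (Arc E)) :=
      fun _ _ _ h h' => hE.fst_eq h.1 h'.1
    rcases hab with hab | hba <;> rcases hbc with hbc | hcb
    · exact Or.inl (hab.trans hbc)
    · rw [← Relation.reflTransGen_swap] at hab hcb
      exact (hab.total_of_right_unique hL hcb).symm.imp Relation.reflTransGen_swap.1
        Relation.reflTransGen_swap.1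
    · exact hba.total_of_right_unique hR hbc
    · exact Or.inr (hcb.trans hba)

theorem linked_loop_iff {i b : ℕ} (hi : (i, i) ∈ E) : Linked E i b ↔ b = i := by
  refine ⟨fun h => ?_, fun h => h ▸ Or.inl .refl⟩
  rcases h with h | h
  · rcases h.cases_head with rfl | ⟨x, hx, -⟩
    · rfl
    · exact absurd (hE.snd_eq hi hx.1) hx.2.ne
  · rcases h.cases_tail with rfl | ⟨x, -, hx⟩
    · rfl
    · exact absurd (hE.fst_eq hi hx.1) hx.2.ne'

theorem le_of_linked_of_mem {i j m : ℕ} (hij : (i, j) ∈ E) (hm : Linked E i m) (him : i < m) :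
    j ≤ m := by
  rcases hm with h | h
  · rcases h.cases_head with rfl | ⟨x, hx, hxm⟩
    · exact absurd him (lt_irrefl _)
    · exact hE.snd_eq hij hx.1 ▸ le_of_reflTransGen_arc hxm
  · exact absurd (le_of_reflTransGen_arc h) him.not_ge

def setoid : Setoid ℕ := ⟨Linked E, hE.linked_equivalence⟩

noncomputable def toPartition : SP n := Finpartition.ofSetSetoid hE.setoid (Icc 1 n)

theorem mem_part_toPartition {a b : ℕ} :
    b ∈ hE.toPartition.part a ↔ a ∈ Icc 1 n ∧ b ∈ Icc 1 n ∧ Linked E a b :=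
  Finpartition.mem_part_ofSetSetoid_iff_rel _

theorem mem_Icc_of_mem {a b : ℕ} (h : (a, b) ∈ E) : a ∈ Icc 1 n ∧ b ∈ Icc 1 n := by
  have := hE.bounds _ h
  exact ⟨mem_Icc.2 ⟨this.1, by omega⟩, mem_Icc.2 ⟨by omega, this.2.2⟩⟩

theorem mem_of_part_toPartition_eq_singleton {i : ℕ} (hi : hE.toPartition.part i = {i}) :
    (i, i) ∈ E := by
  have hself : ∀ b, (i, b) ∈ E ∨ (b, i) ∈ E → b = i := fun b hb => by
    rw [← Finset.mem_singleton, ← hi, hE.mem_part_toPartition]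
    rcases hb with hb | hb
    · exact ⟨(hE.mem_Icc_of_mem hb).1, (hE.mem_Icc_of_mem hb).2, hE.linked_of_mem hb⟩
    · exact ⟨(hE.mem_Icc_of_mem hb).2, (hE.mem_Icc_of_mem hb).1,
        hE.linked_equivalence.symm (hE.linked_of_mem hb)⟩
  have hiI : i ∈ Icc 1 n := (hE.mem_part_toPartition.1 (hi ▸ mem_singleton_self i)).1
  rcases hE.cover i hiI with ⟨b, hb⟩ | ⟨b, hb⟩
  · exact hself b (Or.inl hb) ▸ hb
  · exact hself b (Or.inr hb) ▸ hb

theorem mem_of_mem_part_toPartition {i j : ℕ} (hij : i < j) (hj : j ∈ hE.toPartition.part i)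
    (hbetween : ∀ m ∈ hE.toPartition.part i, ¬(i < m ∧ m < j)) : (i, j) ∈ E := by
  obtain ⟨hiI, -, h | h⟩ := hE.mem_part_toPartition.1 hj
  · obtain ⟨x, hx, hxj⟩ := h.cases_head.resolve_left hij.ne
    have hxpart : x ∈ hE.toPartition.part i :=
      hE.mem_part_toPartition.2 ⟨hiI, (hE.mem_Icc_of_mem hx.1).2, Or.inl (.single hx)⟩
    obtain rfl : x = j := by
      by_contra hne
      exact hbetween x hxpart ⟨hx.2, lt_of_le_of_ne (le_of_reflTransGen_arc hxj) hne⟩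
    exact hx.1
  · exact absurd (le_of_reflTransGen_arc h) hij.not_ge

theorem isEdge_toPartition_iff {i j : ℕ} : IsEdge hE.toPartition i j ↔ (i, j) ∈ E := by
  rw [isEdge_iff]
  constructor
  · rintro (⟨rfl, hi⟩ | ⟨hij, hj, hbetween⟩)
    · exact hE.mem_of_part_toPartition_eq_singleton hi
    · exact hE.mem_of_mem_part_toPartition hij hj hbetween
  · intro h
    obtain ⟨hiI, hjI⟩ := hE.mem_Icc_of_mem h
    have hij : i ≤ j := (hE.bounds _ h).2.1
    rcases hij.lt_or_eq with hij | rfl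
    · refine Or.inr ⟨hij, hE.mem_part_toPartition.2 ⟨hiI, hjI, hE.linked_of_mem h⟩, ?_⟩
      rintro m hm ⟨him, hmj⟩
      exact absurd (hE.le_of_linked_of_mem h (hE.mem_part_toPartition.1 hm).2.2 him) hmj.not_ge
    · refine Or.inl ⟨rfl, Finset.eq_singleton_iff_unique_mem.2 ⟨?_, fun b hb => ?_⟩⟩
      · exact hE.mem_part_toPartition.2 ⟨hiI, hiI, Or.inl .refl⟩
      · exact (hE.linked_loop_iff h).1 (hE.mem_part_toPartition.1 hb).2.2

end IsDiagram

noncomputable def diagram {n : ℕ} (P : SP n) : Finset (ℕ × ℕ) :=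
  (Icc 1 n ×ˢ Icc 1 n).filter fun p => IsEdge P p.1 p.2

section diagram

variable {n : ℕ} {P : SP n}

theorem mem_Icc_of_isEdge {i j : ℕ} (h : IsEdge P i j) : i ∈ Icc 1 n ∧ j ∈ Icc 1 n := by
  rcases (isEdge_iff P).1 h with ⟨rfl, hi⟩ | ⟨-, hj, -⟩
  · have : i ∈ Icc 1 n := P.mem_part_self.1 (by rw [hi]; exact mem_singleton_self i)
    exact ⟨this, this⟩
  · exact ⟨P.part_nonempty.1 ⟨j, hj⟩, P.part_subset i hj⟩

theorem mem_diagram {i j : ℕ} : (i, j) ∈ diagram P ↔ IsEdge P i j := by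
  simp only [diagram, mem_filter, mem_product]
  exact ⟨And.right, fun h => ⟨mem_Icc_of_isEdge h, h⟩⟩

theorem isEdge_snd_eq {i j j' : ℕ} (h : IsEdge P i j) (h' : IsEdge P i j') : j = j' := by
  rcases (isEdge_iff P).1 h with ⟨rfl, hi⟩ | ⟨hij, hj, hb⟩ <;>
    rcases (isEdge_iff P).1 h' with ⟨rfl, hi'⟩ | ⟨hij', hj', hb'⟩
  · rfl
  · rw [hi, mem_singleton] at hj'
    omega
  · rw [hi', mem_singleton] at hj
    omega
  · by_contra hne
    rcases Nat.lt_or_gt_of_ne hne with hlt | hlt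
    · exact hb' j hj ⟨hij, hlt⟩
    · exact hb j' hj' ⟨hij', hlt⟩

theorem isEdge_fst_eq {i i' j : ℕ} (h : IsEdge P i j) (h' : IsEdge P i' j) : i = i' := by
  rcases (isEdge_iff P).1 h with ⟨rfl, hi⟩ | ⟨hij, hj, hb⟩ <;>
    rcases (isEdge_iff P).1 h' with ⟨hi'i, hi'⟩ | ⟨hij', hj', hb'⟩
  · exact hi'i.symm
  · have := P.mem_part_comm.1 hj'
    rw [hi, mem_singleton] at this
    omega
  · have := P.mem_part_comm.1 hj
    rw [← hi'i, hi', mem_singleton] at this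
    omega
  · have hpart : P.part i = P.part i' := by
      rw [← P.part_eq_part_of_mem hj, P.part_eq_part_of_mem hj']
    by_contra hne
    rcases Nat.lt_or_gt_of_ne hne with hlt | hlt
    · exact hb i' (hpart ▸ P.mem_part (mem_Icc_of_isEdge h').1) ⟨hlt, hij'⟩
    · exact hb' i (hpart ▸ P.mem_part (mem_Icc_of_isEdge h).1) ⟨hlt, hij⟩

theorem isEdge_or_isEdge_of_mem {v : ℕ} (hv : v ∈ Icc 1 n) :
    (∃ j, IsEdge P v j) ∨ ∃ i, IsEdge P i v := by
  simp only [isEdge_iff]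
  by_cases hup : ∃ m ∈ P.part v, v < m
  · have hne : ((P.part v).filter (v < ·)).Nonempty := by simpa [Finset.Nonempty] using hup
    obtain ⟨hmem, hlt⟩ := mem_filter.1 (min'_mem _ hne)
    refine Or.inl ⟨_, Or.inr ⟨hlt, hmem, fun m hm ⟨hvm, hmj⟩ => ?_⟩⟩
    exact absurd (min'_le _ m (mem_filter.2 ⟨hm, hvm⟩)) hmj.not_ge
  by_cases hdown : ∃ m ∈ P.part v, m < v
  · have hne : ((P.part v).filter (· < v)).Nonempty := by simpa [Finset.Nonempty] using hdown
    obtain ⟨hmem, hlt⟩ := mem_filter.1 (max'_mem _ hne)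
    refine Or.inr ⟨_, Or.inr ⟨hlt, P.mem_part_comm.1 hmem, fun m hm ⟨him, hmv⟩ => ?_⟩⟩
    rw [P.part_eq_part_of_mem hmem] at hm
    exact absurd (le_max' _ m (mem_filter.2 ⟨hm, hmv⟩)) him.not_ge
  refine Or.inl ⟨v, Or.inl ⟨rfl, eq_singleton_iff_unique_mem.2 ⟨P.mem_part hv, fun m hm => ?_⟩⟩⟩
  push Not at hup hdown
  exact le_antisymm (hup m hm) (hdown m hm)

theorem isDiagram_diagram (P : SP n) : IsDiagram n (diagram P) where
  bounds p hp := by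
    obtain ⟨hi, hj⟩ := mem_Icc_of_isEdge (mem_diagram.1 hp)
    rcases (isEdge_iff P).1 (mem_diagram.1 hp) with ⟨h, -⟩ | ⟨h, -⟩ <;>
      simp only [mem_Icc] at hi hj <;> omega
  injOn_fst p hp q hq h :=
    Prod.ext h (isEdge_snd_eq (mem_diagram.1 hp) (h ▸ mem_diagram.1 hq))
  injOn_snd p hp q hq h :=
    Prod.ext (isEdge_fst_eq (mem_diagram.1 hp) (h ▸ mem_diagram.1 hq)) h
  cover v hv := by simpa only [mem_diagram] using isEdge_or_isEdge_of_mem hv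

theorem reflTransGen_arc_diagram {a b : ℕ} (hab : a ≤ b) (hb : b ∈ P.part a) :
    Relation.ReflTransGen (Arc (diagram P)) a b := by
  induction b using Nat.strong_induction_on with
  | _ b ih =>
    rcases hab.lt_or_eq with hab | rfl
    · have hne : ((P.part a).filter (· < b)).Nonempty :=
        ⟨a, mem_filter.2 ⟨P.mem_part (P.part_nonempty.1 ⟨b, hb⟩), hab⟩⟩
      set m := ((P.part a).filter (· < b)).max' hne
      obtain ⟨hm, hmb⟩ := mem_filter.1 (max'_mem _ hne)
      have hpart := P.part_eq_part_of_mem hm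
      have hedge : IsEdge P m b := (isEdge_iff P).2 <| Or.inr ⟨hmb, hpart ▸ hb,
        fun x hx ⟨hmx, hxb⟩ => absurd (le_max' _ x (mem_filter.2 ⟨hpart ▸ hx, hxb⟩)) hmx.not_ge⟩
      exact (ih m hmb (le_max' _ a (mem_filter.2 ⟨P.mem_part (P.part_nonempty.1 ⟨b, hb⟩), hab⟩))
        hm).tail ⟨mem_diagram.2 hedge, hmb⟩
    · exact .refl

theorem mem_part_of_reflTransGen {a b : ℕ} (ha : a ∈ Icc 1 n)
    (h : Relation.ReflTransGen (Arc (diagram P)) a b) : b ∈ P.part a := by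
  induction h with
  | refl => exact P.mem_part ha
  | tail _ hbc ih =>
    obtain (⟨rfl, -⟩ | ⟨-, hc, -⟩) := (isEdge_iff P).1 (mem_diagram.1 hbc.1)
    · exact absurd hbc.2 (lt_irrefl _)
    · exact P.part_eq_part_of_mem ih ▸ hc

theorem toPartition_diagram (P : SP n) : (isDiagram_diagram P).toPartition = P := by
  refine Finpartition.ext_part _ fun a => Finset.ext fun b => ?_
  rw [IsDiagram.mem_part_toPartition]
  constructor
  · rintro ⟨ha, hb, h | h⟩
    · exact mem_part_of_reflTransGen ha h
    · exact P.mem_part_comm.1 (mem_part_of_reflTransGen hb h)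
  · intro hb
    have ha : a ∈ Icc 1 n := P.part_nonempty.1 ⟨b, hb⟩
    have hb' : b ∈ Icc 1 n := P.part_subset a hb
    refine ⟨ha, hb', ?_⟩
    rcases le_total a b with hab | hba
    · exact Or.inl (reflTransGen_arc_diagram hab hb)
    · exact Or.inr (reflTransGen_arc_diagram hba (P.mem_part_comm.1 hb))

end diagram

theorem IsDiagram.diagram_toPartition {n : ℕ} {E : Finset (ℕ × ℕ)} (hE : IsDiagram n E) :
    diagram hE.toPartition = E := by
  ext ⟨i, j⟩
  rw [mem_diagram, hE.isEdge_toPartition_iff]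

theorem diagram_injective {n : ℕ} : Function.Injective (diagram (n := n)) := fun P Q h => by
  rw [← toPartition_diagram P, ← toPartition_diagram Q]
  congr 1

noncomputable def partner (E : Finset (ℕ × ℕ)) (j : ℕ) : ℕ := sInf {i | (i, j) ∈ E}

theorem partner_mem {E : Finset (ℕ × ℕ)} {j : ℕ} (h : j ∈ E.image Prod.snd) :
    (partner E j, j) ∈ E := by
  obtain ⟨⟨i, j⟩, hij, rfl⟩ := mem_image.1 h
  exact Nat.sInf_mem (s := {i | (i, j) ∈ E}) ⟨i, hij⟩

theorem partner_eq {E : Finset (ℕ × ℕ)} (hE : Set.InjOn Prod.snd (E : Set (ℕ × ℕ))) {i j : ℕ}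
    (h : (i, j) ∈ E) : partner E j = i :=
  congrArg Prod.fst (hE (partner_mem (mem_image_of_mem _ h)) h rfl)

theorem sum_eq_sum_image_snd {E : Finset (ℕ × ℕ)} (hE : Set.InjOn Prod.snd (E : Set (ℕ × ℕ)))
    (f : ℕ × ℕ → ℕ) : ∑ e ∈ E, f e = ∑ j ∈ E.image Prod.snd, f (partner E j, j) := by
  rw [sum_image hE]
  exact sum_congr rfl fun e he => by rw [partner_eq hE he]

def pending (O : Finset ℕ) (A : Finset (ℕ × ℕ)) (j : ℕ) : Finset ℕ :=
  (O \ A.image Prod.fst).filter (· ≤ j)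

/-- The vertices `i ≤ j` whose edge in `E` ends at `j` or later. -/
def avail (E : Finset (ℕ × ℕ)) (j : ℕ) : Finset ℕ :=
  pending (E.image Prod.fst) (E.filter (·.2 < j)) j

theorem mem_pending {O : Finset ℕ} {A : Finset (ℕ × ℕ)} {j i : ℕ} :
    i ∈ pending O A j ↔ i ∈ O ∧ (∀ p ∈ A, p.1 ≠ i) ∧ i ≤ j := by
  simp only [pending, mem_filter, mem_sdiff, mem_image, not_exists, not_and, and_assoc]

def crossCount (k j h : ℕ) (V : Finset ℕ) : ℕ := #(V.filter fun i => h < i ∧ i + k ≤ j)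

def nestCount (k j h : ℕ) (V : Finset ℕ) : ℕ := #(V.filter fun i => i < h ∧ h + k ≤ j)

namespace IsDiagram

variable {n : ℕ} {E : Finset (ℕ × ℕ)} (hE : IsDiagram n E)
include hE

theorem card_filter_spanning {h j : ℕ} (hhj : (h, j) ∈ E) (Q : ℕ → Prop) [DecidablePred Q]
    (hQ : ¬Q h) :
    #(E.filter fun f => f.1 ≤ j ∧ j < f.2 ∧ Q f.1) = #((avail E j).filter Q) := by
  refine card_bij (fun f _ => f.1) ?_ ?_ ?_
  · rintro ⟨i, j'⟩ hf
    obtain ⟨hf, hij, hjj', hq⟩ := mem_filter.1 hf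
    refine mem_filter.2 ⟨mem_pending.2 ⟨mem_image_of_mem _ hf, fun p hp hpi => ?_, hij⟩, hq⟩
    obtain ⟨hp, hpj⟩ := mem_filter.1 hp
    rw [hE.injOn_fst hp hf hpi] at hpj
    exact absurd hpj (by simp only; omega)
  · exact fun f hf g hg => hE.injOn_fst (mem_filter.1 hf).1 (mem_filter.1 hg).1
  · intro i hi
    obtain ⟨hi, hq⟩ := mem_filter.1 hi
    obtain ⟨hO, hnot, hij⟩ := mem_pending.1 hi
    obtain ⟨⟨i', j'⟩, hf, rfl⟩ := mem_image.1 hO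
    refine ⟨(i', j'), mem_filter.2 ⟨hf, hij, ?_, hq⟩, rfl⟩
    rcases lt_trichotomy j' j with hlt | rfl | hlt
    · exact absurd rfl (hnot _ (mem_filter.2 ⟨hf, hlt⟩))
    · exact absurd (hE.fst_eq hf hhj ▸ hq) hQ
    · exact hlt

theorem card_filter_crossPair {h j : ℕ} (hhj : (h, j) ∈ E) (k : ℕ) :
    #(E.filter (CrossPair k (h, j))) = crossCount k j h (avail E j) := by
  rw [crossCount, ← hE.card_filter_spanning hhj (fun i => h < i ∧ i + k ≤ j) (by omega)]
  congr 1
  refine filter_congr fun f _ => ?_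
  simp only [CrossPair]
  omega

theorem card_filter_nestPair {h j : ℕ} (hhj : (h, j) ∈ E) (k : ℕ) :
    #(E.filter (NestPair k · (h, j))) = nestCount k j h (avail E j) := by
  have := (hE.bounds _ hhj).2.1
  rw [nestCount, ← hE.card_filter_spanning hhj (fun i => i < h ∧ h + k ≤ j) (by omega)]
  congr 1
  refine filter_congr fun f _ => ?_
  simp only [NestPair]
  omega

end IsDiagram

theorem ncard_edge_pairs {n : ℕ} (P : SP n) (r : ℕ × ℕ → ℕ × ℕ → Prop) :
    Set.ncard {p : (ℕ × ℕ) × ℕ × ℕ | IsEdge P p.1.1 p.1.2 ∧ IsEdge P p.2.1 p.2.2 ∧ r p.1 p.2} =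
      #((diagram P ×ˢ diagram P).filter fun p => r p.1 p.2) := by
  rw [← Set.ncard_coe_finset]
  congr 1
  ext ⟨⟨a, b⟩, c, d⟩
  simp [mem_diagram, and_assoc]

theorem dcr_eq_sum {n : ℕ} (k : ℕ) (P : SP n) :
    dcr k P = ∑ e ∈ diagram P, crossCount k e.2 e.1 (avail (diagram P) e.2) := by
  rw [dcr, ncard_edge_pairs]
  simp only [card_filter, sum_product]
  refine sum_congr rfl fun e he => ?_
  rw [← (isDiagram_diagram P).card_filter_crossPair he, card_filter]

theorem dne_eq_sum {n : ℕ} (k : ℕ) (P : SP n) :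
    dne k P = ∑ e ∈ diagram P, nestCount k e.2 e.1 (avail (diagram P) e.2) := by
  rw [dne, ncard_edge_pairs]
  simp only [card_filter, sum_product_right]
  refine sum_congr rfl fun f hf => ?_
  rw [← (isDiagram_diagram P).card_filter_nestPair hf, card_filter]

def farPart (k j : ℕ) (V : Finset ℕ) : Finset ℕ := V.filter (· + k ≤ j)

theorem mem_farPart {k j i : ℕ} {V : Finset ℕ} : i ∈ farPart k j V ↔ i ∈ V ∧ i + k ≤ j :=
  mem_filter

theorem farPart_erase {k j h : ℕ} {V : Finset ℕ} :
    farPart k j (V.erase h) = (farPart k j V).erase h :=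
  filter_erase _ _ _

def SameShape (k j : ℕ) (V W : Finset ℕ) : Prop :=
  (∀ i, j < i + k → (i ∈ V ↔ i ∈ W)) ∧ #(farPart k j V) = #(farPart k j W)

/-- For `h` at distance at least `k` before `j`: the element of `farPart k j W` whose rank is the
reverse of the rank of `h` in `farPart k j V`. -/
noncomputable def reflect (k j : ℕ) (V W : Finset ℕ) (h : ℕ) : ℕ :=
  if h + k ≤ j then
    Nat.nth (· ∈ farPart k j W) (#(farPart k j W) - 1 - Nat.count (· ∈ farPart k j V) h)
  else h

section counts

variable {k j h : ℕ} {V : Finset ℕ}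

theorem crossCount_eq : crossCount k j h V = #((farPart k j V).filter (h < ·)) := by
  rw [crossCount, farPart, filter_filter]
  simp only [and_comm]

theorem nestCount_eq (hfar : h + k ≤ j) :
    nestCount k j h V = Nat.count (· ∈ farPart k j V) h := by
  rw [nestCount, Finset.count_eq_card_filter_lt, farPart, filter_filter]
  congr 1
  exact filter_congr fun i _ => by omega

theorem crossCount_eq_zero (hnear : j < h + k) : crossCount k j h V = 0 :=
  card_eq_zero.2 (filter_eq_empty_iff.2 fun i _ => by omega)

theorem nestCount_eq_zero (hnear : j < h + k) : nestCount k j h V = 0 :=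
  card_eq_zero.2 (filter_eq_empty_iff.2 fun i _ => by omega)

end counts

theorem reflect_of_lt {k j h : ℕ} {V W : Finset ℕ} (hnear : j < h + k) :
    reflect k j V W h = h :=
  if_neg (by omega)

theorem reflect_le {k j h : ℕ} {V W : Finset ℕ} (hW : ∀ i ∈ W, i ≤ j) (hh : h ≤ j) :
    reflect k j V W h ≤ j := by
  unfold reflect
  split_ifs with hfar
  · set F := farPart k j W
    by_cases hr : #F - 1 - Nat.count (· ∈ farPart k j V) h < #F
    · exact hW _ (mem_farPart.1 (Finset.nth_mem_of_lt_card hr)).1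
    · rw [Nat.nth_of_card_le (p := (· ∈ F)) F.finite_toSet
        (by rw [Finset.toFinset_ofPred_mem]; omega)]
      exact Nat.zero_le _
  · exact hh

namespace SameShape

theorem refl (k j : ℕ) (V : Finset ℕ) : SameShape k j V V := ⟨fun _ _ => Iff.rfl, rfl⟩

variable {k j : ℕ} {V W : Finset ℕ}

theorem succ (hVW : SameShape k j V W) : SameShape k (j + 1) V W := by
  refine ⟨fun i hi => hVW.1 i (by omega), ?_⟩
  have hsplit (U : Finset ℕ) : #(farPart k (j + 1) U) =
      #(farPart k j U) + #(U.filter (· + k = j + 1)) := by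
    rw [farPart, farPart, ← card_union_of_disjoint, ← filter_or]
    · congr 1; ext i; simp only [mem_filter]
      exact and_congr_right fun _ => by omega
    · exact disjoint_filter.2 fun i _ h₁ h₂ => by omega
  have hmigrants : V.filter (· + k = j + 1) = W.filter (· + k = j + 1) := by
    ext i; simp only [mem_filter]
    exact ⟨fun ⟨hi, he⟩ => ⟨(hVW.1 i (by omega)).1 hi, he⟩,
      fun ⟨hi, he⟩ => ⟨(hVW.1 i (by omega)).2 hi, he⟩⟩
  rw [hsplit, hsplit, hVW.2, hmigrants]

theorem union {N : Finset ℕ} (hVW : SameShape k j V W) (hV : Disjoint V N) (hW : Disjoint W N) :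
    SameShape k j (V ∪ N) (W ∪ N) := by
  refine ⟨fun i hi => by simp only [mem_union, hVW.1 i hi], ?_⟩
  rw [farPart, farPart, filter_union, filter_union,
    card_union_of_disjoint (disjoint_filter_filter hV),
    card_union_of_disjoint (disjoint_filter_filter hW)]
  exact congrArg (· + _) hVW.2

theorem erase {h x : ℕ} (hVW : SameShape k j V W) (hh : h ∈ V) (hx : x ∈ W)
    (hfar : h + k ≤ j ↔ x + k ≤ j) (hnear : j < h + k → x = h) :
    SameShape k j (V.erase h) (W.erase x) := by
  refine ⟨fun i hi => ?_, ?_⟩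
  · simp only [mem_erase, hVW.1 i hi]
    by_cases hh' : j < h + k
    · rw [hnear hh']
    · constructor <;> rintro ⟨-, hi'⟩ <;> exact ⟨by omega, hi'⟩
  · by_cases hh' : h + k ≤ j
    · rw [farPart_erase, farPart_erase, card_erase_of_mem (mem_farPart.2 ⟨hh, hh'⟩),
        card_erase_of_mem (mem_farPart.2 ⟨hx, hfar.1 hh'⟩)]
      exact congrArg (· - 1) hVW.2
    · rw [farPart_erase, farPart_erase, hnear (by omega),
        erase_eq_of_notMem (by simp only [mem_farPart]; omega),
        erase_eq_of_notMem (by simp only [mem_farPart]; omega)]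
      exact hVW.2

theorem eq_empty (hVW : SameShape k j V W) (hV : V = ∅) : W = ∅ := by
  subst hV
  refine eq_empty_of_forall_notMem fun i hi => ?_
  by_cases hi' : j < i + k
  · exact notMem_empty i ((hVW.1 i hi').2 hi)
  · have : farPart k j W = ∅ := by
      rw [← card_eq_zero, ← hVW.2]; rfl
    exact notMem_empty i (this ▸ mem_farPart.2 ⟨hi, by omega⟩)

variable {h : ℕ} (hVW : SameShape k j V W) (hh : h ∈ V)
include hVW hh

theorem reflect_mem_farPart (hfar : h + k ≤ j) : reflect k j V W h ∈ farPart k j W := by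
  have := Finset.count_lt_card (mem_farPart.2 ⟨hh, hfar⟩)
  rw [reflect, if_pos hfar]
  exact Finset.nth_mem_of_lt_card (by rw [← hVW.2]; omega)

theorem reflect_mem : reflect k j V W h ∈ W := by
  by_cases hfar : h + k ≤ j
  · exact (mem_farPart.1 (hVW.reflect_mem_farPart hh hfar)).1
  · rw [reflect_of_lt (by omega)]
    exact (hVW.1 h (by omega)).1 hh

theorem reflect_add_le_iff : reflect k j V W h + k ≤ j ↔ h + k ≤ j := by
  by_cases hfar : h + k ≤ j
  · exact iff_of_true (mem_farPart.1 (hVW.reflect_mem_farPart hh hfar)).2 hfar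
  · rw [reflect_of_lt (by omega)]

theorem count_reflect (hfar : h + k ≤ j) :
    Nat.count (· ∈ farPart k j W) (reflect k j V W h) =
      #(farPart k j W) - 1 - Nat.count (· ∈ farPart k j V) h := by
  have := Finset.count_lt_card (mem_farPart.2 ⟨hh, hfar⟩)
  rw [reflect, if_pos hfar]
  exact Finset.count_nth_of_lt_card (by rw [← hVW.2]; omega)

theorem reflect_reflect : reflect k j W V (reflect k j V W h) = h := by
  by_cases hfar : h + k ≤ j
  · have := Finset.count_lt_card (mem_farPart.2 ⟨hh, hfar⟩)
    rw [reflect, if_pos ((hVW.reflect_add_le_iff hh).2 hfar), hVW.count_reflect hh hfar, hVW.2]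
    rw [show #(farPart k j W) - 1 - (#(farPart k j W) - 1 - Nat.count (· ∈ farPart k j V) h) =
      Nat.count (· ∈ farPart k j V) h by rw [← hVW.2]; omega]
    exact Nat.nth_count (p := (· ∈ farPart k j V)) (mem_farPart.2 ⟨hh, hfar⟩)
  · rw [reflect_of_lt (V := V) (W := W) (by omega), reflect_of_lt (by omega)]

theorem crossCount_reflect : crossCount k j (reflect k j V W h) W = nestCount k j h V := by
  by_cases hfar : h + k ≤ j
  · have := Finset.count_lt_card (mem_farPart.2 ⟨hh, hfar⟩)
    rw [crossCount_eq, Finset.card_filter_gt (hVW.reflect_mem_farPart hh hfar),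
      hVW.count_reflect hh hfar, nestCount_eq hfar, ← hVW.2]
    omega
  · rw [reflect_of_lt (by omega), crossCount_eq_zero (by omega), nestCount_eq_zero (by omega)]

theorem nestCount_reflect : nestCount k j (reflect k j V W h) W = crossCount k j h V := by
  by_cases hfar : h + k ≤ j
  · have := Finset.count_lt_card (mem_farPart.2 ⟨hh, hfar⟩)
    rw [nestCount_eq ((hVW.reflect_add_le_iff hh).2 hfar), hVW.count_reflect hh hfar,
      crossCount_eq, Finset.card_filter_gt (mem_farPart.2 ⟨hh, hfar⟩), hVW.2]
  · rw [reflect_of_lt (by omega), crossCount_eq_zero (by omega), nestCount_eq_zero (by omega)]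

end SameShape

section pending

variable {O : Finset ℕ} {A : Finset (ℕ × ℕ)} {j : ℕ}

theorem le_of_mem_pending {i : ℕ} (hi : i ∈ pending O A j) : i ≤ j := (mem_pending.1 hi).2.2

theorem pending_insert {x y : ℕ} : pending O (insert (x, y) A) j = (pending O A j).erase x := by
  ext i
  simp only [mem_pending, mem_erase, mem_insert, forall_eq_or_imp]
  constructor
  · rintro ⟨hO, ⟨hx, hA⟩, hij⟩
    exact ⟨Ne.symm hx, hO, hA, hij⟩
  · rintro ⟨hx, hO, hA, hij⟩
    exact ⟨hO, ⟨Ne.symm hx, hA⟩, hij⟩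

theorem pending_succ (hA : ∀ p ∈ A, p.1 ≤ j) :
    pending O A (j + 1) = pending O A j ∪ O.filter (· = j + 1) := by
  ext i
  simp only [mem_union, mem_pending, mem_filter]
  constructor
  · rintro ⟨hO, hA', hij⟩
    rcases hij.lt_or_eq with hlt | rfl
    · exact Or.inl ⟨hO, hA', Nat.lt_succ_iff.1 hlt⟩
    · exact Or.inr ⟨hO, rfl⟩
  · rintro (⟨hO, hA', hij⟩ | ⟨hO, rfl⟩)
    · exact ⟨hO, hA', by omega⟩
    · exact ⟨hO, fun p hp hpi => by have := hA p hp; omega, le_rfl⟩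

theorem disjoint_filter_eq_succ {V : Finset ℕ} (hV : ∀ i ∈ V, i ≤ j) :
    Disjoint V (O.filter (· = j + 1)) :=
  disjoint_left.2 fun i hi hi' => by have := hV i hi; have := (mem_filter.1 hi').2; omega

end pending

theorem filter_snd_lt_succ {E : Finset (ℕ × ℕ)} (hE : Set.InjOn Prod.snd (E : Set (ℕ × ℕ)))
    (j : ℕ) : E.filter (·.2 < j + 1) =
      if j ∈ E.image Prod.snd then insert (partner E j, j) (E.filter (·.2 < j))
      else E.filter (·.2 < j) := by
  ext ⟨a, b⟩
  split_ifs with hj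
  · simp only [mem_filter, mem_insert, Prod.mk.injEq]
    constructor
    · rintro ⟨hab, hb⟩
      rcases Nat.lt_succ_iff_lt_or_eq.1 hb with hb | rfl
      · exact Or.inr ⟨hab, hb⟩
      · exact Or.inl ⟨(partner_eq hE hab).symm, rfl⟩
    · rintro (⟨rfl, rfl⟩ | ⟨hab, hb⟩)
      · exact ⟨partner_mem hj, Nat.lt_succ_self _⟩
      · exact ⟨hab, by omega⟩
  · simp only [mem_filter]
    refine and_congr_right fun hab => ⟨fun hb => lt_of_le_of_ne (Nat.lt_succ_iff.1 hb) ?_,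
      fun hb => by omega⟩
    rintro rfl
    exact hj (mem_image_of_mem _ hab)

namespace IsDiagram

variable {n : ℕ} {E : Finset (ℕ × ℕ)} (hE : IsDiagram n E)
include hE

theorem le_of_mem_image_snd {j : ℕ} (hj : j ∈ E.image Prod.snd) : j ≤ n := by
  obtain ⟨p, hp, rfl⟩ := mem_image.1 hj
  exact (hE.bounds p hp).2.2

theorem mem_avail_of_mem {i j j' : ℕ} (h : (i, j') ∈ E) (hij : i ≤ j) (hjj' : j ≤ j') :
    i ∈ avail E j := by
  refine mem_pending.2 ⟨mem_image_of_mem _ h, fun p hp hpi => ?_, hij⟩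
  obtain ⟨hp, hpj⟩ := mem_filter.1 hp
  rw [hE.injOn_fst hp h hpi] at hpj
  exact absurd hpj (by simp only; omega)

theorem partner_mem_avail {j : ℕ} (hj : j ∈ E.image Prod.snd) : partner E j ∈ avail E j :=
  hE.mem_avail_of_mem (partner_mem hj) (hE.bounds _ (partner_mem hj)).2.1 le_rfl

theorem avail_succ (j : ℕ) : avail E (j + 1) =
    (if j ∈ E.image Prod.snd then (avail E j).erase (partner E j) else avail E j) ∪
      (E.image Prod.fst).filter (· = j + 1) := by
  have hle : ∀ p ∈ E.filter (·.2 < j + 1), p.1 ≤ j := fun p hp => by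
    have := hE.bounds p (mem_filter.1 hp).1; have := (mem_filter.1 hp).2; omega
  rw [avail, pending_succ hle, filter_snd_lt_succ hE.injOn_snd]
  split_ifs <;> simp only [pending_insert, avail]

theorem avail_eq_empty : avail E (n + 1) = ∅ := by
  refine eq_empty_of_forall_notMem fun i hi => ?_
  obtain ⟨hO, hA, -⟩ := mem_pending.1 hi
  obtain ⟨p, hp, rfl⟩ := mem_image.1 hO
  exact hA p (mem_filter.2 ⟨hp, by have := hE.bounds p hp; omega⟩) rfl

end IsDiagram

noncomputable def mirrorLeft (k : ℕ) (E A : Finset (ℕ × ℕ)) (j : ℕ) : ℕ :=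
  reflect k j (avail E j) (pending (E.image Prod.fst) A j) (partner E j)

noncomputable def mirrorPrefix (k : ℕ) (E : Finset (ℕ × ℕ)) : ℕ → Finset (ℕ × ℕ)
  | 0 => ∅
  | j + 1 =>
    if j ∈ E.image Prod.snd then
      insert (mirrorLeft k E (mirrorPrefix k E j) j, j) (mirrorPrefix k E j)
    else mirrorPrefix k E j

noncomputable def mirror (k n : ℕ) (E : Finset (ℕ × ℕ)) : Finset (ℕ × ℕ) :=
  mirrorPrefix k E (n + 1)

section mirrorPrefix

variable {k : ℕ} {E : Finset (ℕ × ℕ)}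

theorem mem_mirrorPrefix {j : ℕ} {p : ℕ × ℕ} : p ∈ mirrorPrefix k E j ↔
    p.2 < j ∧ p.2 ∈ E.image Prod.snd ∧ p.1 = mirrorLeft k E (mirrorPrefix k E p.2) p.2 := by
  induction j with
  | zero => simp [mirrorPrefix]
  | succ j ih =>
    obtain ⟨a, b⟩ := p
    rw [mirrorPrefix]
    split_ifs with hj
    · rw [mem_insert, ih, Prod.mk.injEq]
      constructor
      · rintro (⟨rfl, rfl⟩ | ⟨hb, hbE, ha⟩)
        · exact ⟨Nat.lt_succ_self _, hj, rfl⟩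
        · exact ⟨by omega, hbE, ha⟩
      · rintro ⟨hb, hbE, ha⟩
        rcases Nat.lt_succ_iff_lt_or_eq.1 hb with hb | rfl
        · exact Or.inr ⟨hb, hbE, ha⟩
        · exact Or.inl ⟨ha, rfl⟩
    · rw [ih]
      refine ⟨fun ⟨hb, hbE, ha⟩ => ⟨by omega, hbE, ha⟩, fun ⟨hb, hbE, ha⟩ => ⟨?_, hbE, ha⟩⟩
      refine lt_of_le_of_ne (Nat.lt_succ_iff.1 hb) ?_
      rintro rfl
      exact hj hbE

theorem mirrorPrefix_eq_filter {j m : ℕ} (hjm : j ≤ m) :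
    mirrorPrefix k E j = (mirrorPrefix k E m).filter (·.2 < j) := by
  ext p
  rw [mem_filter, mem_mirrorPrefix, mem_mirrorPrefix]
  exact ⟨fun ⟨hj, hE, h⟩ => ⟨⟨by omega, hE, h⟩, hj⟩, fun ⟨⟨_, hE, h⟩, hj⟩ => ⟨hj, hE, h⟩⟩

theorem mk_mirrorLeft_mem_mirrorPrefix {j m : ℕ} (hj : j ∈ E.image Prod.snd) (hjm : j < m) :
    (mirrorLeft k E (mirrorPrefix k E j) j, j) ∈ mirrorPrefix k E m :=
  mem_mirrorPrefix.2 ⟨hjm, hj, rfl⟩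

theorem image_snd_mirrorPrefix (j : ℕ) :
    (mirrorPrefix k E j).image Prod.snd = (E.image Prod.snd).filter (· < j) := by
  ext m
  rw [mem_filter]
  constructor
  · rintro h
    obtain ⟨p, hp, rfl⟩ := mem_image.1 h
    exact ⟨(mem_mirrorPrefix.1 hp).2.1, (mem_mirrorPrefix.1 hp).1⟩
  · rintro ⟨hm, hmj⟩
    exact mem_image_of_mem _ (mk_mirrorLeft_mem_mirrorPrefix hm hmj)

theorem injOn_snd_mirrorPrefix (j : ℕ) :
    Set.InjOn Prod.snd (mirrorPrefix k E j : Set (ℕ × ℕ)) := fun p hp q hq h => by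
  have hp := mem_mirrorPrefix.1 hp
  have hq := mem_mirrorPrefix.1 hq
  exact Prod.ext (by rw [hp.2.2, hq.2.2, h]) h

theorem IsDiagram.fst_le_of_mem_mirrorPrefix {n j : ℕ} (hE : IsDiagram n E) {p : ℕ × ℕ}
    (hp : p ∈ mirrorPrefix k E j) : p.1 ≤ p.2 := by
  obtain ⟨-, hpE, hp1⟩ := mem_mirrorPrefix.1 hp
  rw [hp1, mirrorLeft]
  exact reflect_le (fun i => le_of_mem_pending) (hE.bounds _ (partner_mem hpE)).2.1

end mirrorPrefix

namespace IsDiagram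

variable {n k : ℕ} {E : Finset (ℕ × ℕ)} (hE : IsDiagram n E)
include hE

theorem sameShape_mirrorPrefix (j : ℕ) :
    SameShape k j (avail E j) (pending (E.image Prod.fst) (mirrorPrefix k E j) j) := by
  induction j with
  | zero =>
    rw [avail, mirrorPrefix, filter_false_of_mem fun p _ => Nat.not_lt_zero _]
    exact SameShape.refl _ _ _
  | succ j ih =>
    have hle : ∀ p ∈ mirrorPrefix k E (j + 1), p.1 ≤ j := fun p hp => by
      have := hE.fst_le_of_mem_mirrorPrefix hp; have := (mem_mirrorPrefix.1 hp).1; omega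
    rw [hE.avail_succ, pending_succ hle, mirrorPrefix]
    have hdisj {V : Finset ℕ} (hV : ∀ i ∈ V, i ≤ j) :=
      disjoint_filter_eq_succ (O := E.image Prod.fst) hV
    split_ifs with hj
    · have hh := hE.partner_mem_avail hj
      rw [pending_insert]
      refine ((ih.erase hh (ih.reflect_mem hh) (ih.reflect_add_le_iff hh).symm
        fun hnear => reflect_of_lt hnear).succ).union ?_ ?_ <;>
        exact hdisj fun i hi => le_of_mem_pending (mem_of_mem_erase hi)
    · exact ih.succ.union (hdisj fun _ => le_of_mem_pending) (hdisj fun _ => le_of_mem_pending)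

theorem mirrorLeft_mem_pending {j : ℕ} (hj : j ∈ E.image Prod.snd) :
    mirrorLeft k E (mirrorPrefix k E j) j ∈ pending (E.image Prod.fst) (mirrorPrefix k E j) j :=
  (hE.sameShape_mirrorPrefix j).reflect_mem (hE.partner_mem_avail hj)

theorem pending_mirror_eq_empty :
    pending (E.image Prod.fst) (mirror k n E) (n + 1) = ∅ :=
  (hE.sameShape_mirrorPrefix (n + 1)).eq_empty hE.avail_eq_empty

theorem image_snd_mirror : (mirror k n E).image Prod.snd = E.image Prod.snd := by
  rw [mirror, image_snd_mirrorPrefix, filter_true_of_mem]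
  exact fun j hj => Nat.lt_succ_of_le (hE.le_of_mem_image_snd hj)

theorem image_fst_mirror : (mirror k n E).image Prod.fst = E.image Prod.fst := by
  ext i
  constructor
  · intro hi
    obtain ⟨p, hp, rfl⟩ := mem_image.1 hi
    obtain ⟨-, hpE, hp1⟩ := mem_mirrorPrefix.1 hp
    rw [hp1]
    exact (mem_pending.1 (hE.mirrorLeft_mem_pending hpE)).1
  · intro hi
    by_contra hS
    have hin : i ≤ n + 1 := by
      obtain ⟨p, hp, rfl⟩ := mem_image.1 hi
      have := hE.bounds p hp
      omega
    have : i ∈ pending (E.image Prod.fst) (mirror k n E) (n + 1) :=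
      mem_pending.2 ⟨hi, fun p hp hpi => hS (hpi ▸ mem_image_of_mem _ hp), hin⟩
    rw [hE.pending_mirror_eq_empty] at this
    exact notMem_empty i this

theorem isDiagram_mirror : IsDiagram n (mirror k n E) where
  bounds p hp := by
    have h1 : p.1 ∈ E.image Prod.fst := hE.image_fst_mirror ▸ mem_image_of_mem _ hp
    have h2 : p.2 ∈ E.image Prod.snd := hE.image_snd_mirror ▸ mem_image_of_mem _ hp
    obtain ⟨q, hq, hq1⟩ := mem_image.1 h1
    obtain ⟨r, hr, hr2⟩ := mem_image.1 h2
    have := hE.bounds q hq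
    have := hE.bounds r hr
    have := hE.fst_le_of_mem_mirrorPrefix hp
    omega
  injOn_fst p hp q hq hpq := by
    wlog hlt : p.2 ≤ q.2 generalizing p q
    · exact (this q hq p hp hpq.symm (by omega)).symm
    rcases hlt.lt_or_eq with hlt | heq
    · obtain ⟨hqn, hqE, hq1⟩ := mem_mirrorPrefix.1 hq
      have hpq' : p ∈ mirrorPrefix k E q.2 := by
        rw [mirrorPrefix_eq_filter hqn.le]
        exact mem_filter.2 ⟨hp, hlt⟩
      exact absurd (hpq.trans hq1) ((mem_pending.1 (hE.mirrorLeft_mem_pending hqE)).2.1 p hpq')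
    · exact injOn_snd_mirrorPrefix _ hp hq heq
  injOn_snd := injOn_snd_mirrorPrefix _
  cover v hv := by
    rcases hE.cover v hv with ⟨j, hj⟩ | ⟨i, hi⟩
    · obtain ⟨p, hp, hpv⟩ := mem_image.1 (hE.image_fst_mirror ▸ mem_image_of_mem Prod.fst hj :
        v ∈ (mirror k n E).image Prod.fst)
      exact Or.inl ⟨p.2, hpv ▸ hp⟩
    · obtain ⟨p, hp, hpv⟩ := mem_image.1 (hE.image_snd_mirror ▸ mem_image_of_mem Prod.snd hi :
        v ∈ (mirror k n E).image Prod.snd)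
      exact Or.inr ⟨p.1, hpv ▸ hp⟩

theorem avail_mirror {j : ℕ} (hj : j ≤ n + 1) :
    avail (mirror k n E) j = pending (E.image Prod.fst) (mirrorPrefix k E j) j := by
  rw [avail, hE.image_fst_mirror, mirror, ← mirrorPrefix_eq_filter hj]

theorem partner_mirror {j : ℕ} (hj : j ∈ E.image Prod.snd) :
    partner (mirror k n E) j = mirrorLeft k E (mirrorPrefix k E j) j :=
  partner_eq (injOn_snd_mirrorPrefix _)
    (mk_mirrorLeft_mem_mirrorPrefix hj (Nat.lt_succ_of_le (hE.le_of_mem_image_snd hj)))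

theorem sum_crossCount_mirror :
    ∑ e ∈ mirror k n E, crossCount k e.2 e.1 (avail (mirror k n E) e.2) =
      ∑ e ∈ E, nestCount k e.2 e.1 (avail E e.2) := by
  rw [sum_eq_sum_image_snd (hE.isDiagram_mirror (k := k)).injOn_snd,
    sum_eq_sum_image_snd hE.injOn_snd, hE.image_snd_mirror]
  refine sum_congr rfl fun j hj => ?_
  rw [hE.partner_mirror hj, hE.avail_mirror (Nat.le_succ_of_le (hE.le_of_mem_image_snd hj))]
  exact (hE.sameShape_mirrorPrefix j).crossCount_reflect (hE.partner_mem_avail hj)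

theorem sum_nestCount_mirror :
    ∑ e ∈ mirror k n E, nestCount k e.2 e.1 (avail (mirror k n E) e.2) =
      ∑ e ∈ E, crossCount k e.2 e.1 (avail E e.2) := by
  rw [sum_eq_sum_image_snd (hE.isDiagram_mirror (k := k)).injOn_snd,
    sum_eq_sum_image_snd hE.injOn_snd, hE.image_snd_mirror]
  refine sum_congr rfl fun j hj => ?_
  rw [hE.partner_mirror hj, hE.avail_mirror (Nat.le_succ_of_le (hE.le_of_mem_image_snd hj))]
  exact (hE.sameShape_mirrorPrefix j).nestCount_reflect (hE.partner_mem_avail hj)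

theorem mirrorPrefix_mirror {j : ℕ} (hj : j ≤ n + 1) :
    mirrorPrefix k (mirror k n E) j = E.filter (·.2 < j) := by
  induction j with
  | zero => simp [mirrorPrefix]
  | succ j ih =>
    rw [mirrorPrefix, filter_snd_lt_succ hE.injOn_snd, ih (by omega), hE.image_snd_mirror]
    split_ifs with hjE
    · rw [mirrorLeft, hE.avail_mirror (by omega), hE.partner_mirror hjE, hE.image_fst_mirror,
        mirrorLeft]
      congr 2
      exact (hE.sameShape_mirrorPrefix j).reflect_reflect (hE.partner_mem_avail hjE)
    · rfl

theorem mirror_mirror : mirror k n (mirror k n E) = E := by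
  rw [mirror, hE.mirrorPrefix_mirror le_rfl, filter_true_of_mem]
  exact fun p hp => Nat.lt_succ_of_le (hE.bounds p hp).2.2

end IsDiagram

section mirrorPartition

variable {n : ℕ} (k : ℕ)

noncomputable def mirrorPartition (P : SP n) : SP n :=
  ((isDiagram_diagram P).isDiagram_mirror (k := k)).toPartition

theorem diagram_mirrorPartition (P : SP n) :
    diagram (mirrorPartition k P) = mirror k n (diagram P) :=
  IsDiagram.diagram_toPartition _

theorem mirrorPartition_involutive : Function.Involutive (mirrorPartition (n := n) k) :=
  fun P => diagram_injective <| by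
    rw [diagram_mirrorPartition, diagram_mirrorPartition, (isDiagram_diagram P).mirror_mirror]

theorem dcr_mirrorPartition (P : SP n) : dcr k (mirrorPartition k P) = dne k P := by
  rw [dcr_eq_sum, dne_eq_sum, diagram_mirrorPartition]
  exact (isDiagram_diagram P).sum_crossCount_mirror

theorem dne_mirrorPartition (P : SP n) : dne k (mirrorPartition k P) = dcr k P := by
  rw [dcr_eq_sum, dne_eq_sum, diagram_mirrorPartition]
  exact (isDiagram_diagram P).sum_nestCount_mirror

end mirrorPartition

open MvPolynomial in
theorem distant_crossings_nestings_symmetric_general (k n : ℕ) :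
    ∑ P : SP n, (X 0 : MvPolynomial (Fin 2) ℤ) ^ dcr k P * X 1 ^ dne k P =
      ∑ P : SP n, (X 0 : MvPolynomial (Fin 2) ℤ) ^ dne k P * X 1 ^ dcr k P := by
  refine Fintype.sum_bijective (mirrorPartition k) (mirrorPartition_involutive k).bijective _ _
    fun P => ?_
  rw [dcr_mirrorPartition, dne_mirrorPartition]

open MvPolynomial in
/-- The joint distribution of `k`-distant crossings and `k`-distant nestings
over set partitions of `[n]` is symmetric. -/
theorem distant_crossings_nestings_symmetric (k n : ℕ) (hn : 0 < n) :
    ∑ P : SP n, (X 0 : MvPolynomial (Fin 2) ℤ) ^ dcr k P * X 1 ^ dne k P =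
      ∑ P : SP n, (X 0 : MvPolynomial (Fin 2) ℤ) ^ dne k P * X 1 ^ dcr k P :=
  distant_crossings_nestings_symmetric_general k n
end

section
/- For complete matchings, 0-distant noncrossing and 1-distant noncrossing coincide: a complete matching of [2n] has no 0-distant crossing if and only if it has no 1-distant crossing. Consequently NCM_0(2n) = NCM_1(2n) = C_n, the n-th Catalan number. -/
open Finset

/-!
In a matching, a crossing `i₁ < i₂ ≤ j₁ < j₂` with `j₁ = i₂` would put the vertex `j₁` on two
edges, so `0`-distant and `1`-distant crossings are both just crossings.

Noncrossing matchings of `[2n]` correspond to Dyck paths of semilength `n`: openers become up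
steps and closers down steps. When no arcs cross, the partner of an opener `i` is the first time
after `i` at which the path drops below its height at `i`, so the path determines the matching;
conversely, pairing every up step with that first descent gives a noncrossing matching. Dyck paths
are counted by the Catalan numbers.
-/

namespace LatticePath

/-- A finite set `A ⊆ {1, 2, …}` encodes the ±1 lattice path whose `t`-th step is up iff
`t ∈ A`. -/
def upCount (A : Finset ℕ) (t : ℕ) : ℕ := #{x ∈ A | x ≤ t}

def height (A : Finset ℕ) (t : ℕ) : ℤ := 2 * (upCount A t : ℤ) - t

variable {A : Finset ℕ} {n m i i' t : ℕ}

lemma upCount_zero (h0 : 0 ∉ A) : upCount A 0 = 0 := by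
  simp only [upCount, card_eq_zero, filter_eq_empty_iff, nonpos_iff_eq_zero]
  rintro x hx rfl
  exact h0 hx

lemma upCount_succ (A : Finset ℕ) (t : ℕ) :
    upCount A (t + 1) = upCount A t + if t + 1 ∈ A then 1 else 0 := by
  have hsplit : {x ∈ A | x ≤ t + 1} = {x ∈ A | x ≤ t} ∪ {x ∈ A | x = t + 1} := by
    ext x
    simp only [mem_filter, mem_union, ← and_or_left]
    exact and_congr_right fun _ => by omega
  rw [upCount, upCount, hsplit, card_union_of_disjoint (disjoint_filter.2 fun x _ h h' => by omega),
    filter_eq' A (t + 1)]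
  split_ifs <;> simp

lemma upCount_eq_card (h : ∀ x ∈ A, x ≤ t) : upCount A t = #A := by
  rw [upCount, filter_true_of_mem h]

lemma upCount_eq_add (hit : i ≤ t) : upCount A t = upCount A i + #(A ∩ Ioc i t) := by
  rw [upCount, ← card_filter_add_card_filter_not (p := (· ≤ i)), filter_filter, filter_filter,
    upCount, ← filter_mem_eq_inter]
  congr 2 <;> ext x <;> simp only [mem_filter, mem_Ioc] <;> exact and_congr_right fun _ => by omega

lemma height_succ (A : Finset ℕ) (t : ℕ) :
    height A (t + 1) = height A t + if t + 1 ∈ A then 1 else -1 := by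
  rw [height, height, upCount_succ]
  split_ifs <;> push_cast <;> ring

lemma height_of_mem (hi : i ∈ A) (h1 : 1 ≤ i) : height A i = height A (i - 1) + 1 := by
  obtain ⟨j, rfl⟩ : ∃ j, i = j + 1 := ⟨i - 1, by omega⟩
  simp [height_succ, hi]

lemma height_of_notMem (hi : i ∉ A) (h1 : 1 ≤ i) : height A i = height A (i - 1) - 1 := by
  obtain ⟨j, rfl⟩ : ∃ j, i = j + 1 := ⟨i - 1, by omega⟩
  simp [height_succ, hi, sub_eq_add_neg]

def descentSet (A : Finset ℕ) (m i : ℕ) : Finset ℕ :=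
  {t ∈ Icc 1 m | i < t ∧ height A t < height A i}

noncomputable def firstDescent (A : Finset ℕ) (m i : ℕ) : ℕ :=
  if h : (descentSet A m i).Nonempty then (descentSet A m i).min' h else 0

lemma mem_descentSet :
    t ∈ descentSet A m i ↔ 1 ≤ t ∧ t ≤ m ∧ i < t ∧ height A t < height A i := by
  simp [descentSet, and_assoc]

lemma isLeast_firstDescent (h : (descentSet A m i).Nonempty) :
    IsLeast (descentSet A m i : Set ℕ) (firstDescent A m i) := by
  rw [firstDescent, dif_pos h]
  exact isLeast_min' _ h

lemma firstDescent_eq {j : ℕ} (h : IsLeast (descentSet A m i : Set ℕ) j) :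
    firstDescent A m i = j :=
  (isLeast_firstDescent ⟨j, h.1⟩).unique h

structure IsDyckSet (n : ℕ) (A : Finset ℕ) : Prop where
  subset_Icc : A ⊆ Icc 1 (2 * n)
  card_eq : #A = n
  height_nonneg : ∀ t ≤ 2 * n, 0 ≤ height A t

namespace IsDyckSet

lemma zero_notMem (hA : IsDyckSet n A) : 0 ∉ A := fun h => by simpa using hA.subset_Icc h

lemma upCount_two_mul (hA : IsDyckSet n A) : upCount A (2 * n) = n := by
  rw [upCount_eq_card fun x hx => (mem_Icc.mp (hA.subset_Icc hx)).2, hA.card_eq]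

lemma height_two_mul (hA : IsDyckSet n A) : height A (2 * n) = 0 := by
  simp only [height, hA.upCount_two_mul]
  push_cast
  ring

lemma one_le_height (hA : IsDyckSet n A) (hi : i ∈ A) : 1 ≤ height A i := by
  have hi' := mem_Icc.mp (hA.subset_Icc hi)
  have := hA.height_nonneg (i - 1) (by omega)
  rw [height_of_mem hi hi'.1]
  omega

lemma descentSet_nonempty (hA : IsDyckSet n A) (hi : i ∈ A) :
    (descentSet A (2 * n) i).Nonempty := by
  have hi' := mem_Icc.mp (hA.subset_Icc hi)
  have hpos := hA.one_le_height hi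
  have hlt : i < 2 * n := lt_of_le_of_ne hi'.2 fun e => by
    rw [e, hA.height_two_mul] at hpos; omega
  exact ⟨2 * n, mem_descentSet.mpr ⟨by omega, le_rfl, hlt, by rw [hA.height_two_mul]; omega⟩⟩

lemma isLeast_firstDescent (hA : IsDyckSet n A) (hi : i ∈ A) :
    IsLeast (descentSet A (2 * n) i : Set ℕ) (firstDescent A (2 * n) i) :=
  LatticePath.isLeast_firstDescent (hA.descentSet_nonempty hi)

lemma firstDescent_spec (hA : IsDyckSet n A) (hi : i ∈ A) :
    1 ≤ firstDescent A (2 * n) i ∧ firstDescent A (2 * n) i ≤ 2 * n ∧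
      i < firstDescent A (2 * n) i ∧ height A (firstDescent A (2 * n) i) < height A i :=
  mem_descentSet.mp (hA.isLeast_firstDescent hi).1

lemma height_le_of_lt_firstDescent (hA : IsDyckSet n A) (hi : i ∈ A) (hit : i ≤ t)
    (ht : t < firstDescent A (2 * n) i) : height A i ≤ height A t := by
  by_contra! hlt
  have h1 := (mem_Icc.mp (hA.subset_Icc hi)).1
  have h2 := (hA.firstDescent_spec hi).2.1
  have hit' : i < t := lt_of_le_of_ne hit (by rintro rfl; exact lt_irrefl _ hlt)
  have := (hA.isLeast_firstDescent hi).2 (mem_descentSet.mpr ⟨by omega, by omega, hit', hlt⟩)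
  omega

lemma firstDescent_notMem (hA : IsDyckSet n A) (hi : i ∈ A) : firstDescent A (2 * n) i ∉ A := by
  intro h
  obtain ⟨h1, -, h3, h4⟩ := hA.firstDescent_spec hi
  have := hA.height_le_of_lt_firstDescent hi (t := firstDescent A (2 * n) i - 1) (by omega)
    (by omega)
  rw [height_of_mem h h1] at h4
  omega

lemma height_firstDescent (hA : IsDyckSet n A) (hi : i ∈ A) :
    height A (firstDescent A (2 * n) i) = height A i - 1 := by
  obtain ⟨h1, -, h3, h4⟩ := hA.firstDescent_spec hi
  have := hA.height_le_of_lt_firstDescent hi (t := firstDescent A (2 * n) i - 1) (by omega)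
    (by omega)
  rw [height_of_notMem (hA.firstDescent_notMem hi) h1] at h4 ⊢
  omega

lemma height_lt_of_lt_firstDescent (hA : IsDyckSet n A) (hi : i ∈ A) (hi' : i' ∈ A)
    (hii' : i < i') (hi'd : i' < firstDescent A (2 * n) i) : height A i < height A i' := by
  have := hA.height_le_of_lt_firstDescent hi (t := i' - 1) (by omega) (by omega)
  rw [height_of_mem hi' (by omega)]
  omega

lemma firstDescent_lt_firstDescent (hA : IsDyckSet n A) (hi : i ∈ A) (hi' : i' ∈ A)
    (hii' : i < i') (hi'd : i' < firstDescent A (2 * n) i) :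
    firstDescent A (2 * n) i' < firstDescent A (2 * n) i := by
  obtain ⟨h1, h2, -, h4⟩ := hA.firstDescent_spec hi
  have hlt := hA.height_lt_of_lt_firstDescent hi hi' hii' hi'd
  have hle := (hA.isLeast_firstDescent hi').2 (mem_descentSet.mpr ⟨h1, h2, hi'd, by omega⟩)
  refine lt_of_le_of_ne hle fun e => ?_
  have e1 := hA.height_firstDescent hi
  have e2 := hA.height_firstDescent hi'
  rw [e] at e2
  omega

lemma firstDescent_injOn (hA : IsDyckSet n A) : Set.InjOn (firstDescent A (2 * n)) A := by
  intro i hi i' hi' e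
  by_contra hne
  rcases lt_or_gt_of_ne hne with h | h
  · have := (hA.firstDescent_spec hi').2.2.1
    exact (hA.firstDescent_lt_firstDescent hi hi' h (by omega)).ne e.symm
  · have := (hA.firstDescent_spec hi).2.2.1
    exact (hA.firstDescent_lt_firstDescent hi' hi h (by omega)).ne e

lemma firstDescent_mem_Icc (hA : IsDyckSet n A) (hi : i ∈ A) :
    firstDescent A (2 * n) i ∈ Icc 1 (2 * n) :=
  mem_Icc.mpr ⟨(hA.firstDescent_spec hi).1, (hA.firstDescent_spec hi).2.1⟩

lemma union_image_firstDescent (hA : IsDyckSet n A) :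
    A ∪ A.image (firstDescent A (2 * n)) = Icc 1 (2 * n) := by
  have hdisj : Disjoint A (A.image (firstDescent A (2 * n))) := by
    simp only [disjoint_right, mem_image]
    rintro _ ⟨i, hi, rfl⟩
    exact hA.firstDescent_notMem hi
  have hsub : A ∪ A.image (firstDescent A (2 * n)) ⊆ Icc 1 (2 * n) :=
    union_subset hA.subset_Icc (image_subset_iff.mpr fun i hi => hA.firstDescent_mem_Icc hi)
  refine eq_of_subset_of_card_le hsub ?_
  rw [card_union_of_disjoint hdisj, card_image_of_injOn hA.firstDescent_injOn, hA.card_eq,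
    Nat.card_Icc]
  omega

end IsDyckSet

open DyckStep

def toWord (A : Finset ℕ) (m : ℕ) : List DyckStep :=
  (List.range m).map fun i => if i + 1 ∈ A then U else D

def ofWord (l : List DyckStep) : Finset ℕ := {x ∈ Icc 1 l.length | l[x - 1]? = some U}

@[simp] lemma length_toWord : (toWord A m).length = m := by simp [toWord]

lemma getElem?_toWord (hi : i < m) :
    (toWord A m)[i]? = some (if i + 1 ∈ A then U else D) := by
  simp [toWord, hi]

lemma take_toWord (t : ℕ) : (toWord A m).take t = toWord A (min t m) := by
  simp [toWord, List.take_range, ← List.map_take]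

lemma count_toWord (h0 : 0 ∉ A) (t : ℕ) :
    (toWord A t).count U = upCount A t ∧ (toWord A t).count D + upCount A t = t := by
  induction t with
  | zero => simp [toWord, upCount_zero h0]
  | succ t ih =>
    simp only [toWord, List.range_succ, List.map_append, List.count_append] at ih ⊢
    rw [upCount_succ]
    by_cases h : t + 1 ∈ A <;> simp [h] <;> omega

lemma ofWord_toWord (hA : A ⊆ Icc 1 m) : ofWord (toWord A m) = A := by
  ext x
  simp only [ofWord, mem_filter, mem_Icc, length_toWord]
  constructor
  · rintro ⟨hx, hU⟩
    rw [getElem?_toWord (by omega), Nat.sub_add_cancel hx.1] at hU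
    by_contra h
    simp [h] at hU
  · intro h
    have hx := mem_Icc.mp (hA h)
    rw [getElem?_toWord (by omega), Nat.sub_add_cancel hx.1]
    simp [h, hx]

lemma toWord_ofWord (l : List DyckStep) : toWord (ofWord l) l.length = l := by
  refine List.ext_getElem? fun i => ?_
  rcases lt_or_ge i l.length with hi | hi
  · rw [getElem?_toWord hi]
    simp only [ofWord, mem_filter, mem_Icc, Nat.add_sub_cancel]
    rcases (l[i]).dichotomy with h | h <;> simp [h, hi]
  · rw [List.getElem?_eq_none (by simpa using hi), List.getElem?_eq_none hi]

lemma IsDyckSet.count_D_take_le_count_U (hA : IsDyckSet n A) (t : ℕ) :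
    ((toWord A (2 * n)).take t).count D ≤ ((toWord A (2 * n)).take t).count U := by
  obtain ⟨hU, hD⟩ := count_toWord hA.zero_notMem (min t (2 * n))
  have := hA.height_nonneg (min t (2 * n)) (min_le_right _ _)
  rw [take_toWord, hU]
  simp only [height] at this
  omega

lemma IsDyckSet.count_toWord_eq (hA : IsDyckSet n A) :
    (toWord A (2 * n)).count U = n ∧ (toWord A (2 * n)).count D = n := by
  obtain ⟨hU, hD⟩ := count_toWord hA.zero_notMem (2 * n)
  rw [hA.upCount_two_mul] at hU hD
  omega

def IsDyckSet.toDyckWord (hA : IsDyckSet n A) : DyckWord where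
  toList := toWord A (2 * n)
  count_U_eq_count_D := hA.count_toWord_eq.1.trans hA.count_toWord_eq.2.symm
  count_D_le_count_U := hA.count_D_take_le_count_U

lemma isDyckSet_ofWord (p : DyckWord) : IsDyckSet p.semilength (ofWord p.toList) := by
  set A := ofWord p.toList
  have hlen := p.two_mul_semilength_eq_length
  have hsub : A ⊆ Icc 1 (2 * p.semilength) := by rw [hlen]; exact filter_subset _ _
  have hcount (t : ℕ) (ht : t ≤ 2 * p.semilength) :
      (p.toList.take t).count U = upCount A t ∧ (p.toList.take t).count D + upCount A t = t := by
    rw [← toWord_ofWord p.toList, take_toWord, min_eq_left (hlen ▸ ht)]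
    exact count_toWord (fun h => by simpa using hsub h) t
  refine ⟨hsub, ?_, fun t ht => ?_⟩
  · rw [← upCount_eq_card fun x hx => (mem_Icc.mp (hsub hx)).2, ← (hcount _ le_rfl).1,
      List.take_of_length_le hlen.ge, DyckWord.semilength]
  · have := hcount t ht
    have := p.count_D_le_count_U t
    simp only [height]
    omega

def dyckSetEquivDyckWord (n : ℕ) :
    {A : Finset ℕ // IsDyckSet n A} ≃ {p : DyckWord // p.semilength = n} where
  toFun A := ⟨A.2.toDyckWord, A.2.count_toWord_eq.1⟩
  invFun p := ⟨ofWord p.1.toList, by simpa only [p.2] using isDyckSet_ofWord p.1⟩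
  left_inv A := Subtype.ext (ofWord_toWord A.2.subset_Icc)
  right_inv := by
    rintro ⟨p, rfl⟩
    refine Subtype.ext (DyckWord.ext ?_)
    change toWord _ (2 * p.semilength) = _
    rw [p.two_mul_semilength_eq_length, toWord_ofWord]

end LatticePath

lemma Finset.pair_eq_pair_of_lt {a b c d : ℕ} (h : ({a, b} : Finset ℕ) = {c, d}) (hab : a < b)
    (hcd : c < d) : a = c ∧ b = d := by
  have ha : a ∈ ({c, d} : Finset ℕ) := h ▸ mem_insert_self a {b}
  have hb : b ∈ ({c, d} : Finset ℕ) := h ▸ mem_insert_of_mem (mem_singleton_self b)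
  simp only [mem_insert, mem_singleton] at ha hb
  omega

namespace Matching

open LatticePath

variable {m : ℕ} {P : SP m} {i j t : ℕ}

lemma mem_Icc_of_pair_mem_parts (h : {i, j} ∈ P.parts) : i ∈ Icc 1 m ∧ j ∈ Icc 1 m :=
  ⟨P.le h (mem_insert_self i {j}), P.le h (mem_insert_of_mem (mem_singleton_self j))⟩

lemma eq_of_pair_mem_parts {j' : ℕ} (h : {i, j} ∈ P.parts) (h' : {i, j'} ∈ P.parts)
    (hj : j ≠ i) : j = j' := by
  have hB := P.eq_of_mem_parts h h' (mem_insert_self i {j}) (mem_insert_self i {j'})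
  have : j ∈ ({i, j'} : Finset ℕ) := hB ▸ mem_insert_of_mem (mem_singleton_self j)
  simp only [mem_insert, mem_singleton] at this
  tauto

lemma exists_pair_mem_parts (hM : IsMatching P) (hi : i ∈ Icc 1 m) :
    ∃ j, j ≠ i ∧ {i, j} ∈ P.parts := by
  obtain ⟨B, hB, hiB⟩ := P.exists_mem hi
  obtain ⟨a, b, hab, rfl⟩ := card_eq_two.mp (hM B hB)
  rcases mem_insert.mp hiB with rfl | hib
  · exact ⟨b, hab.symm, hB⟩
  · rw [mem_singleton.mp hib, pair_comm] at *
    exact ⟨a, hab, hB⟩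

open scoped Classical in
/-- Junk value `0` when the block of `x` is not a pair. -/
noncomputable def partner (P : SP m) (x : ℕ) : ℕ :=
  if h : ∃ y, y ≠ x ∧ {x, y} ∈ P.parts then h.choose else 0

lemma partner_spec (hM : IsMatching P) (hi : i ∈ Icc 1 m) :
    partner P i ≠ i ∧ {i, partner P i} ∈ P.parts := by
  have h := exists_pair_mem_parts hM hi
  rw [partner, dif_pos h]
  exact h.choose_spec

lemma partner_eq (hM : IsMatching P) (h : {i, j} ∈ P.parts) : partner P i = j :=
  have hs := partner_spec hM (mem_Icc_of_pair_mem_parts h).1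
  eq_of_pair_mem_parts hs.2 h hs.1

lemma partner_partner (hM : IsMatching P) (hi : i ∈ Icc 1 m) : partner P (partner P i) = i :=
  have hs := partner_spec hM hi
  partner_eq hM (pair_comm i _ ▸ hs.2)

lemma partner_mem_Icc (hM : IsMatching P) (hi : i ∈ Icc 1 m) : partner P i ∈ Icc 1 m :=
  (mem_Icc_of_pair_mem_parts (partner_spec hM hi).2).2

lemma card_le_card_of_mapsTo_partner (hM : IsMatching P) {S T : Finset ℕ} (hS : S ⊆ Icc 1 m)
    (hST : ∀ x ∈ S, partner P x ∈ T) : #S ≤ #T :=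
  card_le_card_of_injOn (partner P) hST fun x hx y hy hxy => by
    rw [← partner_partner hM (hS hx), hxy, partner_partner hM (hS hy)]

lemma exists_lt_of_mem_parts (hM : IsMatching P) {B : Finset ℕ} (hB : B ∈ P.parts) :
    ∃ i j, i < j ∧ B = {i, j} := by
  obtain ⟨a, b, hab, rfl⟩ := card_eq_two.mp (hM B hB)
  rcases lt_or_gt_of_ne hab with h | h
  · exact ⟨a, b, h, rfl⟩
  · exact ⟨b, a, h, pair_comm a b⟩

noncomputable def openerSet (P : SP m) : Finset ℕ := {i ∈ Icc 1 m | i < partner P i}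

noncomputable def closerSet (P : SP m) : Finset ℕ := {i ∈ Icc 1 m | partner P i < i}

lemma mem_openerSet : i ∈ openerSet P ↔ i ∈ Icc 1 m ∧ i < partner P i := mem_filter

lemma mem_closerSet : i ∈ closerSet P ↔ i ∈ Icc 1 m ∧ partner P i < i := mem_filter

lemma openerSet_subset : openerSet P ⊆ Icc 1 m := filter_subset _ _

lemma closerSet_subset : closerSet P ⊆ Icc 1 m := filter_subset _ _

lemma mem_openerSet_of_pair_mem_parts (hM : IsMatching P) (h : {i, j} ∈ P.parts) (hij : i < j) :
    i ∈ openerSet P :=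
  mem_openerSet.mpr ⟨(mem_Icc_of_pair_mem_parts h).1, partner_eq hM h ▸ hij⟩

lemma mem_closerSet_of_pair_mem_parts (hM : IsMatching P) (h : {i, j} ∈ P.parts) (hij : i < j) :
    j ∈ closerSet P :=
  mem_closerSet.mpr ⟨(mem_Icc_of_pair_mem_parts h).2,
    partner_eq hM (pair_comm i j ▸ h) ▸ hij⟩

lemma partner_mem_closerSet (hM : IsMatching P) (hi : i ∈ openerSet P) :
    partner P i ∈ closerSet P :=
  have ⟨hi, hlt⟩ := mem_openerSet.mp hi
  mem_closerSet.mpr ⟨partner_mem_Icc hM hi, (partner_partner hM hi).symm ▸ hlt⟩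

lemma partner_mem_openerSet (hM : IsMatching P) (hi : i ∈ closerSet P) :
    partner P i ∈ openerSet P :=
  have ⟨hi, hlt⟩ := mem_closerSet.mp hi
  mem_openerSet.mpr ⟨partner_mem_Icc hM hi, (partner_partner hM hi).symm ▸ hlt⟩

lemma disjoint_openerSet_closerSet : Disjoint (openerSet P) (closerSet P) :=
  disjoint_filter.2 fun _ _ h h' => lt_asymm h h'

lemma openerSet_union_closerSet (hM : IsMatching P) : openerSet P ∪ closerSet P = Icc 1 m := by
  rw [openerSet, closerSet, ← filter_or, filter_true_of_mem]
  exact fun x hx => lt_or_gt_of_ne (partner_spec hM hx).1.symm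

lemma mem_Icc_of_isEdge (h : IsEdge P i j) : i ∈ Icc 1 m ∧ j ∈ Icc 1 m := by
  rcases h with ⟨rfl, hs⟩ | ⟨-, B, hB, hiB, hjB, -⟩
  · exact ⟨P.le hs (mem_singleton_self i), P.le hs (mem_singleton_self i)⟩
  · exact ⟨P.le hB hiB, P.le hB hjB⟩

lemma dcr_eq_zero_iff (k : ℕ) (P : SP m) : dcr k P = 0 ↔
    ∀ e₁ e₂ : ℕ × ℕ, IsEdge P e₁.1 e₁.2 → IsEdge P e₂.1 e₂.2 → ¬CrossPair k e₁ e₂ := by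
  have hfin : {p : (ℕ × ℕ) × ℕ × ℕ |
      IsEdge P p.1.1 p.1.2 ∧ IsEdge P p.2.1 p.2.2 ∧ CrossPair k p.1 p.2}.Finite := by
    let I := Icc 1 m
    refine ((I ×ˢ I) ×ˢ (I ×ˢ I)).finite_toSet.subset fun p ⟨h₁, h₂, _⟩ => ?_
    simp only [coe_product, Set.mem_prod, mem_coe]
    exact ⟨mem_Icc_of_isEdge h₁, mem_Icc_of_isEdge h₂⟩
  rw [dcr, Set.ncard_eq_zero hfin, Set.eq_empty_iff_forall_notMem]
  simp only [Set.mem_ofPred_eq, not_and, Prod.forall]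

lemma isEdge_iff (hM : IsMatching P) : IsEdge P i j ↔ i < j ∧ {i, j} ∈ P.parts := by
  constructor
  · rintro (⟨rfl, hs⟩ | ⟨hij, B, hB, hiB, hjB, -⟩)
    · simpa using hM _ hs
    · have : ({i, j} : Finset ℕ) = B :=
        eq_of_subset_of_card_le (insert_subset hiB (singleton_subset_iff.mpr hjB))
          (by rw [hM B hB, card_pair hij.ne])
      exact ⟨hij, this ▸ hB⟩
  · rintro ⟨hij, hB⟩
    refine Or.inr ⟨hij, {i, j}, hB, by simp, by simp, fun x hx => ?_⟩
    simp only [mem_insert, mem_singleton] at hx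
    omega

def IsNoncrossing (P : SP m) : Prop :=
  ∀ a b c d : ℕ, {a, b} ∈ P.parts → {c, d} ∈ P.parts → a < c → c < b → b < d → False

lemma dcr_eq_zero_iff_isNoncrossing (hM : IsMatching P) {k : ℕ} (hk : k ≤ 1) :
    dcr k P = 0 ↔ IsNoncrossing P := by
  simp only [dcr_eq_zero_iff, isEdge_iff hM, Prod.forall, CrossPair]
  constructor
  · intro h a b c d hab hcd hac hcb hbd
    exact h a b c d ⟨by omega, hab⟩ ⟨by omega, hcd⟩ ⟨hac, hcb.le, hbd, by omega⟩
  · rintro h a b c d ⟨-, hab⟩ ⟨-, hcd⟩ ⟨hac, hcb, hbd, -⟩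
    rcases hcb.lt_or_eq with hcb | rfl
    · exact h a b c d hab hcd hac hcb hbd
    · have := eq_of_pair_mem_parts (pair_comm a c ▸ hab) hcd (by omega)
      omega

lemma upCount_openerSet_add_upCount_closerSet (hM : IsMatching P) (ht : t ≤ m) :
    upCount (openerSet P) t + upCount (closerSet P) t = t := by
  rw [upCount, upCount,
    ← card_union_of_disjoint (disjoint_filter_filter disjoint_openerSet_closerSet), ← filter_union,
    openerSet_union_closerSet hM,
    show {x ∈ Icc 1 m | x ≤ t} = Icc 1 t by ext x; simp only [mem_filter, mem_Icc]; omega,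
    Nat.card_Icc, Nat.add_sub_cancel]

lemma upCount_closerSet_le (hM : IsMatching P) (t : ℕ) :
    upCount (closerSet P) t ≤ upCount (openerSet P) t :=
  card_le_card_of_mapsTo_partner hM ((filter_subset _ _).trans closerSet_subset) fun x hx => by
    obtain ⟨hxc, hxt⟩ := mem_filter.mp hx
    exact mem_filter.mpr ⟨partner_mem_openerSet hM hxc, (mem_closerSet.mp hxc).2.le.trans hxt⟩

lemma card_openerSet {n : ℕ} {P : SP (2 * n)} (hM : IsMatching P) : #(openerSet P) = n := by
  have hsum := card_union_of_disjoint (disjoint_openerSet_closerSet (P := P))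
  rw [openerSet_union_closerSet hM, Nat.card_Icc] at hsum
  have hle : #(openerSet P) ≤ #(closerSet P) :=
    card_le_card_of_mapsTo_partner hM openerSet_subset fun _ => partner_mem_closerSet hM
  have hge := upCount_closerSet_le hM (2 * n)
  rw [upCount_eq_card fun x hx => (mem_Icc.mp (openerSet_subset hx)).2,
    upCount_eq_card fun x hx => (mem_Icc.mp (closerSet_subset hx)).2] at hge
  omega

lemma isDyckSet_openerSet {n : ℕ} {P : SP (2 * n)} (hM : IsMatching P) :
    IsDyckSet n (openerSet P) where
  subset_Icc := openerSet_subset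
  card_eq := card_openerSet hM
  height_nonneg t ht := by
    have := upCount_openerSet_add_upCount_closerSet hM ht
    have := upCount_closerSet_le hM t
    simp only [height]
    omega

lemma height_openerSet_sub (hM : IsMatching P) (hit : i ≤ t) (ht : t ≤ m) :
    height (openerSet P) t - height (openerSet P) i =
      (#(openerSet P ∩ Ioc i t) : ℤ) - #(closerSet P ∩ Ioc i t) := by
  have := upCount_eq_add (A := openerSet P) hit
  have := upCount_eq_add (A := closerSet P) hit
  have := upCount_openerSet_add_upCount_closerSet hM ht
  have := upCount_openerSet_add_upCount_closerSet hM (hit.trans ht)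
  simp only [height]
  omega

/-- The partner of a closer in `(i, t]` lies in `(i, t]`, or its arc would cross `{i, j}`. -/
lemma card_closerSet_inter_Ioc_le (hM : IsMatching P) (hNC : IsNoncrossing P)
    (hij : {i, j} ∈ P.parts) (htj : t < j) :
    #(closerSet P ∩ Ioc i t) ≤ #(openerSet P ∩ Ioc i t) :=
  card_le_card_of_mapsTo_partner hM (inter_subset_left.trans closerSet_subset) fun x hx => by
    obtain ⟨hxc, hix, hxt⟩ := by simpa only [mem_inter, mem_Ioc] using hx
    have hx := (mem_closerSet.mp hxc).1
    have hpi : partner P x ≠ i := fun e => by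
      have := partner_partner hM hx
      rw [e, partner_eq hM hij] at this
      omega
    have hip : i < partner P x := by
      by_contra! h
      exact hNC _ x i j (pair_comm x _ ▸ (partner_spec hM hx).2) hij (by omega) hix (by omega)
    exact mem_inter.mpr ⟨partner_mem_openerSet hM hxc,
      mem_Ioc.mpr ⟨hip, (mem_closerSet.mp hxc).2.le.trans hxt⟩⟩

/-- The partner of an opener in `(i, j)` lies in `(i, j)`, or its arc would cross `{i, j}`. -/
lemma card_openerSet_inter_Ioc_le (hM : IsMatching P) (hNC : IsNoncrossing P)
    (hij : {i, j} ∈ P.parts) :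
    #(openerSet P ∩ Ioc i (j - 1)) ≤ #(closerSet P ∩ Ioc i (j - 1)) :=
  card_le_card_of_mapsTo_partner hM (inter_subset_left.trans openerSet_subset) fun x hx => by
    obtain ⟨hxo, hix, hxj⟩ := by simpa only [mem_inter, mem_Ioc] using hx
    have hx := (mem_openerSet.mp hxo).1
    have hpj : partner P x ≠ j := fun e => by
      have := partner_partner hM hx
      rw [e, partner_eq hM (pair_comm i j ▸ hij)] at this
      omega
    have hpj' : partner P x < j := by
      by_contra! h
      exact hNC i j x _ hij (partner_spec hM hx).2 hix (by omega) (by omega)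
    exact mem_inter.mpr ⟨partner_mem_closerSet hM hxo,
      mem_Ioc.mpr ⟨by have := (mem_openerSet.mp hxo).2; omega, by omega⟩⟩

lemma height_openerSet_le (hM : IsMatching P) (hNC : IsNoncrossing P) (hij : {i, j} ∈ P.parts)
    (hit : i ≤ t) (htj : t < j) :
    height (openerSet P) i ≤ height (openerSet P) t := by
  have hjm := (mem_Icc.mp (mem_Icc_of_pair_mem_parts hij).2).2
  have := height_openerSet_sub hM hit (by omega)
  have := card_closerSet_inter_Ioc_le hM hNC hij htj
  omega

lemma height_openerSet_of_pair_mem_parts (hM : IsMatching P) (hNC : IsNoncrossing P)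
    (hij : {i, j} ∈ P.parts) (hlt : i < j) :
    height (openerSet P) j = height (openerSet P) i - 1 := by
  have hj := mem_Icc.mp (mem_Icc_of_pair_mem_parts hij).2
  have hjc := disjoint_left.mp disjoint_openerSet_closerSet.symm
    (mem_closerSet_of_pair_mem_parts hM hij hlt)
  have := height_openerSet_sub hM (i := i) (t := j - 1) (by omega) (by omega)
  have := card_closerSet_inter_Ioc_le hM hNC hij (t := j - 1) (by omega)
  have := card_openerSet_inter_Ioc_le hM hNC hij
  rw [height_of_notMem hjc hj.1]
  omega

lemma firstDescent_openerSet (hM : IsMatching P) (hNC : IsNoncrossing P) (hij : {i, j} ∈ P.parts)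
    (hlt : i < j) : firstDescent (openerSet P) m i = j := by
  have hj := mem_Icc.mp (mem_Icc_of_pair_mem_parts hij).2
  refine firstDescent_eq ⟨mem_descentSet.mpr ⟨hj.1, hj.2, hlt, ?_⟩, fun t ht => ?_⟩
  · rw [height_openerSet_of_pair_mem_parts hM hNC hij hlt]
    omega
  · obtain ⟨-, -, hit, hti⟩ := mem_descentSet.mp ht
    by_contra! htj
    exact absurd (height_openerSet_le hM hNC hij hit.le htj) (not_le.mpr hti)

lemma parts_subset_of_openerSet_eq {Q : SP m} (hMP : IsMatching P) (hMQ : IsMatching Q)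
    (hNCP : IsNoncrossing P) (hNCQ : IsNoncrossing Q) (h : openerSet P = openerSet Q) :
    P.parts ⊆ Q.parts := by
  intro B hB
  obtain ⟨i, j, hij, rfl⟩ := exists_lt_of_mem_parts hMP hB
  have hiQ := mem_openerSet.mp (h ▸ mem_openerSet_of_pair_mem_parts hMP hB hij)
  have hQ := (partner_spec hMQ hiQ.1).2
  rwa [← firstDescent_openerSet hMQ hNCQ hQ hiQ.2, ← h,
    firstDescent_openerSet hMP hNCP hB hij] at hQ

lemma eq_of_openerSet_eq {Q : SP m} (hMP : IsMatching P) (hMQ : IsMatching Q)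
    (hNCP : IsNoncrossing P) (hNCQ : IsNoncrossing Q) (h : openerSet P = openerSet Q) :
    P = Q :=
  Finpartition.ext <| (parts_subset_of_openerSet_eq hMP hMQ hNCP hNCQ h).antisymm
    (parts_subset_of_openerSet_eq hMQ hMP hNCQ hNCP h.symm)

variable {n : ℕ} {A : Finset ℕ}

noncomputable def ofDyckSet (hA : IsDyckSet n A) : SP (2 * n) where
  parts := A.image fun i => {i, firstDescent A (2 * n) i}
  supIndep := by
    rw [supIndep_iff_pairwiseDisjoint]
    rintro _ hB _ hC hBC
    obtain ⟨i, hi, rfl⟩ := mem_image.mp hB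
    obtain ⟨i', hi', rfl⟩ := mem_image.mp hC
    have hii' : i ≠ i' := fun e => hBC (by rw [e])
    simp only [Function.onFun, id, disjoint_insert_left, disjoint_insert_right,
      disjoint_singleton, mem_insert, mem_singleton, not_or]
    exact ⟨⟨hii'.symm, fun e => hA.firstDescent_notMem hi (e ▸ hi')⟩,
      fun e => hA.firstDescent_notMem hi' (e ▸ hi), hA.firstDescent_injOn.ne hi hi' hii'⟩
  sup_parts := by
    rw [← hA.union_image_firstDescent]
    ext x
    simp only [mem_sup, mem_image, id, mem_union]
    constructor
    · rintro ⟨_, ⟨i, hi, rfl⟩, hx⟩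
      rcases mem_insert.mp hx with rfl | hx
      exacts [Or.inl hi, Or.inr ⟨i, hi, (mem_singleton.mp hx).symm⟩]
    · rintro (hx | ⟨i, hi, rfl⟩)
      exacts [⟨_, ⟨x, hx, rfl⟩, mem_insert_self _ _⟩,
        ⟨_, ⟨i, hi, rfl⟩, mem_insert_of_mem (mem_singleton_self _)⟩]
  bot_notMem := by
    simp only [mem_image, not_exists, not_and]
    exact fun i _ h => by simpa using congrArg (i ∈ ·) h

lemma mem_parts_ofDyckSet (hA : IsDyckSet n A) {B : Finset ℕ} :
    B ∈ (ofDyckSet hA).parts ↔ ∃ i ∈ A, {i, firstDescent A (2 * n) i} = B :=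
  mem_image

lemma isMatching_ofDyckSet (hA : IsDyckSet n A) : IsMatching (ofDyckSet hA) := by
  intro B hB
  obtain ⟨i, hi, rfl⟩ := (mem_parts_ofDyckSet hA).mp hB
  exact card_pair (hA.firstDescent_spec hi).2.2.1.ne

lemma isNoncrossing_ofDyckSet (hA : IsDyckSet n A) : IsNoncrossing (ofDyckSet hA) := by
  intro a b c d hab hcd hac hcb hbd
  obtain ⟨i, hi, hB⟩ := (mem_parts_ofDyckSet hA).mp hab
  obtain ⟨i', hi', hC⟩ := (mem_parts_ofDyckSet hA).mp hcd
  obtain ⟨rfl, rfl⟩ := pair_eq_pair_of_lt hB (hA.firstDescent_spec hi).2.2.1 (by omega)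
  obtain ⟨rfl, rfl⟩ := pair_eq_pair_of_lt hC (hA.firstDescent_spec hi').2.2.1 (by omega)
  have := hA.firstDescent_lt_firstDescent hi hi' hac hcb
  omega

lemma openerSet_ofDyckSet (hA : IsDyckSet n A) : openerSet (ofDyckSet hA) = A := by
  have hM := isMatching_ofDyckSet hA
  ext x
  constructor
  · intro hx
    obtain ⟨hx, hlt⟩ := mem_openerSet.mp hx
    obtain ⟨i, hi, hB⟩ := (mem_parts_ofDyckSet hA).mp (partner_spec hM hx).2
    exact (pair_eq_pair_of_lt hB (hA.firstDescent_spec hi).2.2.1 hlt).1 ▸ hi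
  · intro hx
    exact mem_openerSet_of_pair_mem_parts hM ((mem_parts_ofDyckSet hA).mpr ⟨x, hx, rfl⟩)
      (hA.firstDescent_spec hx).2.2.1

noncomputable def noncrossingEquivDyckSet (n : ℕ) :
    {P : SP (2 * n) // IsMatching P ∧ IsNoncrossing P} ≃ {A : Finset ℕ // IsDyckSet n A} where
  toFun P := ⟨openerSet P.1, isDyckSet_openerSet P.2.1⟩
  invFun A := ⟨ofDyckSet A.2, isMatching_ofDyckSet A.2, isNoncrossing_ofDyckSet A.2⟩
  left_inv P :=
    have hA := isDyckSet_openerSet P.2.1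
    Subtype.ext <| eq_of_openerSet_eq (isMatching_ofDyckSet hA) P.2.1
      (isNoncrossing_ofDyckSet hA) P.2.2 (openerSet_ofDyckSet hA)
  right_inv A := Subtype.ext <| openerSet_ofDyckSet A.2

end Matching

open LatticePath Matching in
/-- For complete matchings, 0-distant noncrossing and 1-distant noncrossing
coincide; consequently `NCM₀(2n) = NCM₁(2n) = Cₙ`. -/
theorem ncm_zero_eq_ncm_one_eq_catalan (n : ℕ) :
    (∀ P : SP (2 * n), IsMatching P → (dcr 0 P = 0 ↔ dcr 1 P = 0)) ∧
    NCM 0 (2 * n) = catalan n ∧ NCM 1 (2 * n) = catalan n := by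
  have hNCM (k : ℕ) (hk : k ≤ 1) : NCM k (2 * n) = catalan n := by
    have hset : {P : SP (2 * n) | IsMatching P ∧ dcr k P = 0} =
        {P | IsMatching P ∧ IsNoncrossing P} :=
      Set.ext fun P => and_congr_right fun hM => dcr_eq_zero_iff_isNoncrossing hM hk
    calc NCM k (2 * n) = Nat.card {P : SP (2 * n) // IsMatching P ∧ IsNoncrossing P} := by
          rw [NCM, hset, ← Nat.card_coe_set_eq]; rfl
      _ = Nat.card {p : DyckWord // p.semilength = n} :=
          Nat.card_congr ((noncrossingEquivDyckSet n).trans (dyckSetEquivDyckWord n))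
      _ = catalan n := by
          rw [Nat.card_eq_fintype_card, DyckWord.card_dyckWord_semilength_eq_catalan]
  refine ⟨fun P hM => ?_, hNCM 0 zero_le_one, hNCM 1 le_rfl⟩
  rw [dcr_eq_zero_iff_isNoncrossing hM zero_le_one, dcr_eq_zero_iff_isNoncrossing hM le_rfl]
end

section
/- The number of 2-distant noncrossing partitions of [n] equals the number of 12312-avoiding partitions of [n]. -/
/-!
Both classes grow along the same generating tree. Every partition of `[n + 1]` comes from a
unique partition of `[n]` by making `n + 1` a singleton or adding it to a block. Call a block
*active* when adding `n + 1` to it stays in the class: for 2-distant noncrossing partitions,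
when the new arc from the block's maximum is not 2-distantly crossed; for 12312-avoiding
partitions, when the block plays the `2` of no occurrence of `1231`. In both classes `{n + 1}`
is active, and when `n + 1` joins the active block of rank `r` among `k` (ranked by maximum,
respectively minimum), the active blocks of the child are the enlarged block, the blocks of
smaller rank and the top one. So the number of active blocks follows the rule
`(k) ↝ (2) (3) ⋯ (k) (k) (k + 1)` in both classes, which gives equinumerous levels.
-/

open Finset

/-- `P` avoids the pattern 12312: there are no `a < b < c < d < e` with `a, d`
in a block `A`, `b, e` in a block `B`, `c` in a block `C`, where
`min A < min B < min C`. -/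
def Avoids12312 {n : ℕ} (P : SP n) : Prop :=
  ¬ ∃ a b c d e : ℕ, a < b ∧ b < c ∧ c < d ∧ d < e ∧
    ∃ A ∈ P.parts, ∃ B ∈ P.parts, ∃ C ∈ P.parts,
      a ∈ A ∧ d ∈ A ∧ b ∈ B ∧ e ∈ B ∧ c ∈ C ∧
      (∃ x ∈ A, ∀ y ∈ B, x < y) ∧ (∃ x ∈ B, ∀ y ∈ C, x < y)

/-- The labels of the children of a node labelled `k` in the generating tree
`(k) ↝ (2) (3) ⋯ (k) (k) (k + 1)`. -/
def succLabel (k : ℕ) : Option (Fin k) → ℕ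
  | none => k + 1
  | some i => if (i : ℕ) + 1 = k then k else i + 2

theorem exists_labelEquiv_of_same_rule {C : ℕ → Type*} (rule : ∀ k, C k → ℕ)
    {X Y : ℕ → Type*} (lX : ∀ {n}, X n → ℕ) (lY : ∀ {n}, Y n → ℕ)
    (e₀ : X 0 ≃ Y 0) (he₀ : ∀ x, lY (e₀ x) = lX x)
    (cX : ∀ n, (Σ x : X n, C (lX x)) ≃ X (n + 1))
    (hcX : ∀ n x c, lX (cX n ⟨x, c⟩) = rule (lX x) c)
    (cY : ∀ n, (Σ y : Y n, C (lY y)) ≃ Y (n + 1))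
    (hcY : ∀ n y c, lY (cY n ⟨y, c⟩) = rule (lY y) c) (n : ℕ) :
    ∃ e : X n ≃ Y n, ∀ x, lY (e x) = lX x := by
  induction n with
  | zero => exact ⟨e₀, he₀⟩
  | succ n ih =>
    obtain ⟨e, he⟩ := ih
    have rule_cast : ∀ {k k'} (h : k = k') (c : C k),
        rule k' (Equiv.cast (congrArg C h) c) = rule k c := by
      rintro k _ rfl c; rfl
    let eC : ∀ x, C (lX x) ≃ C (lY (e x)) := fun x => Equiv.cast (congrArg C (he x).symm)
    refine ⟨(cX n).symm.trans ((Equiv.sigmaCongr e eC).trans (cY n)), fun x' => ?_⟩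
    obtain ⟨⟨x, c⟩, rfl⟩ := (cX n).surjective x'
    rw [Equiv.trans_apply, Equiv.trans_apply, Equiv.symm_apply_apply]
    calc lY (cY n ⟨e x, eC x c⟩) = rule (lY (e x)) (eC x c) := hcY n _ _
      _ = rule (lX x) c := rule_cast (he x).symm c
      _ = lX (cX n ⟨x, c⟩) := (hcX n x c).symm

section Rank

variable {α : Type*} (S : Finset α) (key : α → ℕ)

lemma card_filter_key_lt_lt_of_lt {B B' : α} (hB : B ∈ S) (h : key B < key B') :
    #{D ∈ S | key D < key B} < #{D ∈ S | key D < key B'} := by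
  refine card_lt_card ⟨fun D hD => ?_, fun hsub => ?_⟩
  · simp only [mem_filter] at hD ⊢
    exact ⟨hD.1, hD.2.trans h⟩
  · have := (mem_filter.1 (hsub (mem_filter.2 ⟨hB, h⟩))).2
    omega

lemma card_filter_key_lt_lt {B : α} (hB : B ∈ S) : #{D ∈ S | key D < key B} < #S :=
  card_lt_card ⟨filter_subset _ _, fun h => by
    have := (mem_filter.1 (h hB)).2; omega⟩

noncomputable def rankEquiv (hkey : Set.InjOn key S) : S ≃ Fin #S :=
  Equiv.ofBijective (fun B => ⟨#{D ∈ S | key D < key B}, card_filter_key_lt_lt S key B.2⟩) <| by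
    refine (Fintype.bijective_iff_injective_and_card _).2 ⟨fun B B' h => ?_, by simp⟩
    have hrank := congrArg Fin.val h
    simp only at hrank
    refine Subtype.ext (hkey B.2 B'.2 ?_)
    rcases lt_trichotomy (key B) (key B') with hlt | heq | hgt
    · exact absurd hrank (card_filter_key_lt_lt_of_lt S key B.2 hlt).ne
    · exact heq
    · exact absurd hrank (card_filter_key_lt_lt_of_lt S key B'.2 hgt).ne'

lemma rankEquiv_apply (hkey : Set.InjOn key S) (B : S) :
    (rankEquiv S key hkey B : ℕ) = #{D ∈ S | key D < key B} := rfl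

lemma card_filter_key_lt_add_one [DecidableEq α] (hkey : Set.InjOn key S) {T : α} (hT : T ∈ S)
    (hTmax : ∀ D ∈ S, key D ≤ key T) : #{D ∈ S | key D < key T} + 1 = #S := by
  have hS : insert T {D ∈ S | key D < key T} = S := by
    ext D
    simp only [mem_insert, mem_filter]
    refine ⟨by rintro (rfl | h); exacts [hT, h.1], fun hD => ?_⟩
    rcases (hTmax D hD).lt_or_eq with h | h
    exacts [Or.inr ⟨hD, h⟩, Or.inl (hkey hD hT h)]
  conv_rhs => rw [← hS]
  rw [card_insert_of_notMem (by simp)]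

/-- Adding `n + 1` to the active block `B` keeps the active blocks below `B` and the top one `T`,
and creates one new active block `x`. -/
lemma card_insert_filter_eq_succLabel [DecidableEq α] (hkey : Set.InjOn key S) {B T x : α}
    (hB : B ∈ S) (hT : T ∈ S) (hTmax : ∀ D ∈ S, key D ≤ key T) (hx : x ∉ S) :
    #(insert x {D ∈ S | D ≠ B ∧ (key D < key B ∨ D = T)})
      = succLabel #S (some (rankEquiv S key hkey ⟨B, hB⟩)) := by
  have hx' : x ∉ {D ∈ S | D ≠ B ∧ (key D < key B ∨ D = T)} := fun h => hx (mem_filter.1 h).1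
  have htop := card_filter_key_lt_add_one S key hkey hT hTmax
  rw [card_insert_of_notMem hx', succLabel, rankEquiv_apply]
  dsimp only
  by_cases hBT : B = T
  · subst hBT
    have hfilter : {D ∈ S | D ≠ B ∧ (key D < key B ∨ D = B)} = {D ∈ S | key D < key B} :=
      filter_congr fun D _ => ⟨by rintro ⟨hne, h | rfl⟩; exacts [h, absurd rfl hne],
        fun h => ⟨by rintro rfl; omega, Or.inl h⟩⟩
    rw [hfilter, if_pos htop, htop]
  · have hBT' : key B < key T := (hTmax B hB).lt_of_ne fun h => hBT (hkey hB hT h)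
    have hfilter :
        {D ∈ S | D ≠ B ∧ (key D < key B ∨ D = T)} = insert T {D ∈ S | key D < key B} := by
      ext D
      simp only [mem_insert, mem_filter]
      constructor
      · rintro ⟨hD, -, h | rfl⟩
        exacts [Or.inr ⟨hD, h⟩, Or.inl rfl]
      · rintro (rfl | ⟨hD, h⟩)
        · exact ⟨hT, Ne.symm hBT, Or.inr rfl⟩
        · exact ⟨hD, by rintro rfl; omega, Or.inl h⟩
    have hTnot : T ∉ {D ∈ S | key D < key B} := by simp; omega
    have hlt := card_filter_key_lt_lt_of_lt S key hB hBT'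
    rw [hfilter, card_insert_of_notMem hTnot, if_neg (by omega)]

end Rank

def blockMax (B : Finset ℕ) : ℕ := B.max.getD 0

def blockMin (B : Finset ℕ) : ℕ := B.min.getD 0

section Blocks

variable {B : Finset ℕ} {a : ℕ}

lemma blockMax_eq_max' (hB : B.Nonempty) : blockMax B = B.max' hB := by
  rw [blockMax, ← coe_max' hB]; rfl

lemma blockMin_eq_min' (hB : B.Nonempty) : blockMin B = B.min' hB := by
  rw [blockMin, ← coe_min' hB]; rfl

lemma le_blockMax (ha : a ∈ B) : a ≤ blockMax B := by
  rw [blockMax_eq_max' ⟨a, ha⟩]; exact le_max' _ _ ha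

lemma blockMax_mem (hB : B.Nonempty) : blockMax B ∈ B := by
  rw [blockMax_eq_max' hB]; exact max'_mem _ _

lemma blockMin_le (ha : a ∈ B) : blockMin B ≤ a := by
  rw [blockMin_eq_min' ⟨a, ha⟩]; exact min'_le _ _ ha

lemma blockMin_mem (hB : B.Nonempty) : blockMin B ∈ B := by
  rw [blockMin_eq_min' hB]; exact min'_mem _ _

lemma blockMax_singleton (a : ℕ) : blockMax {a} = a := by
  rw [blockMax, max_singleton]; rfl

lemma blockMin_singleton (a : ℕ) : blockMin {a} = a := by
  rw [blockMin, min_singleton]; rfl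

lemma blockMax_insert_of_le (h : ∀ b ∈ B, b ≤ a) : blockMax (insert a B) = a := by
  refine le_antisymm ?_ (le_blockMax (mem_insert_self _ _))
  rcases mem_insert.1 (blockMax_mem (insert_nonempty a B)) with h' | h'
  exacts [h'.le, h _ h']

lemma blockMin_insert_of_le (hB : B.Nonempty) (h : ∀ b ∈ B, b ≤ a) :
    blockMin (insert a B) = blockMin B := by
  refine le_antisymm (blockMin_le (mem_insert_of_mem (blockMin_mem hB))) ?_
  rcases mem_insert.1 (blockMin_mem (insert_nonempty a B)) with h' | h'
  · rw [h']; exact h _ (blockMin_mem hB)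
  · exact blockMin_le h'

end Blocks

section Partitions

variable {n : ℕ} {P : SP n} {B : Finset ℕ} {a : ℕ}

lemma one_le_of_mem_part (hB : B ∈ P.parts) (ha : a ∈ B) : 1 ≤ a :=
  (mem_Icc.1 (P.le hB ha)).1

lemma le_of_mem_part (hB : B ∈ P.parts) (ha : a ∈ B) : a ≤ n :=
  (mem_Icc.1 (P.le hB ha)).2

lemma one_le_of_mem_parts (hB : B ∈ P.parts) : 1 ≤ n := by
  obtain ⟨b, hb⟩ := P.nonempty_of_mem_parts hB
  exact (one_le_of_mem_part hB hb).trans (le_of_mem_part hB hb)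

lemma succ_notMem_part (hB : B ∈ P.parts) : n + 1 ∉ B :=
  fun h => by have := le_of_mem_part hB h; omega

lemma blockMax_le (hB : B ∈ P.parts) : blockMax B ≤ n :=
  le_of_mem_part hB (blockMax_mem (P.nonempty_of_mem_parts hB))

lemma blockMax_injOn (P : SP n) : Set.InjOn blockMax P.parts := fun _ hB _ hC h =>
  P.eq_of_mem_parts hB hC (blockMax_mem (P.nonempty_of_mem_parts hB))
    (h ▸ blockMax_mem (P.nonempty_of_mem_parts hC))

lemma blockMin_injOn (P : SP n) : Set.InjOn blockMin P.parts := fun _ hB _ hC h =>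
  P.eq_of_mem_parts hB hC (blockMin_mem (P.nonempty_of_mem_parts hB))
    (h ▸ blockMin_mem (P.nonempty_of_mem_parts hC))

lemma blockMax_insert_succ (hB : B ∈ P.parts) : blockMax (insert (n + 1) B) = n + 1 :=
  blockMax_insert_of_le fun _ hb => (le_of_mem_part hB hb).trans n.le_succ

lemma blockMin_insert_succ (hB : B ∈ P.parts) : blockMin (insert (n + 1) B) = blockMin B :=
  blockMin_insert_of_le (P.nonempty_of_mem_parts hB)
    fun _ hb => (le_of_mem_part hB hb).trans n.le_succ

end Partitions

section Growth

variable {n : ℕ}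

def addSingleton (P : SP n) : SP (n + 1) :=
  P.extend (b := {n + 1}) (singleton_ne_empty _)
    (by simp [disjoint_singleton_right]) (by ext x; simp; omega)

lemma parts_addSingleton (P : SP n) : (addSingleton P).parts = insert {n + 1} P.parts := rfl

lemma sup_parts_erase (P : SP n) {B : Finset ℕ} (hB : B ∈ P.parts) :
    (P.parts.erase B).sup id = Finset.Icc 1 n \ B := by
  ext x
  simp only [mem_sup, mem_erase, id, mem_sdiff]
  constructor
  · rintro ⟨D, ⟨hDB, hD⟩, hx⟩
    exact ⟨P.le hD hx, fun hxB => hDB (P.eq_of_mem_parts hD hB hx hxB)⟩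
  · rintro ⟨hx, hxB⟩
    exact ⟨P.part x, ⟨fun h => hxB (h ▸ P.mem_part hx), P.part_mem.2 hx⟩, P.mem_part hx⟩

def extendBlock (P : SP n) (B : Finset ℕ) (hB : B ∈ P.parts) : SP (n + 1) :=
  (P.ofSubset (erase_subset B P.parts) (sup_parts_erase P hB)).extend
    (b := insert (n + 1) B) (insert_ne_empty _ _)
    (by
      rw [disjoint_insert_right]
      exact ⟨by simp, sdiff_disjoint⟩)
    (by
      ext x
      by_cases hx : x ∈ B
      · have := mem_Icc.1 (P.le hB hx); simp [hx]; omega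
      · simp [hx]; omega)

lemma parts_extendBlock (P : SP n) {B : Finset ℕ} (hB : B ∈ P.parts) :
    (extendBlock P B hB).parts = insert (insert (n + 1) B) (P.parts.erase B) := rfl

def eraseLast (P' : SP (n + 1)) : SP n :=
  (P'.avoid {n + 1}).copy (by ext x; simp; omega)

lemma mem_eraseLast_parts {P' : SP (n + 1)} {D : Finset ℕ} :
    D ∈ (eraseLast P').parts ↔ ∃ d ∈ P'.parts, d ≠ {n + 1} ∧ d.erase (n + 1) = D := by
  change D ∈ (P'.avoid {n + 1}).parts ↔ _
  rw [Finpartition.mem_avoid]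
  refine exists_congr fun d => and_congr_right fun hd => and_congr ?_ (by rw [erase_eq])
  rw [subset_singleton_iff, not_or]
  exact and_iff_right (nonempty_iff_ne_empty.1 (P'.nonempty_of_mem_parts hd))

lemma erase_succ_of_mem_parts {P : SP n} {D : Finset ℕ} (hD : D ∈ P.parts) : D.erase (n + 1) = D :=
  erase_eq_of_notMem (succ_notMem_part hD)

lemma ne_singleton_succ_of_mem_parts {P : SP n} {D : Finset ℕ} (hD : D ∈ P.parts) :
    D ≠ {n + 1} :=
  fun h => succ_notMem_part hD (h ▸ mem_singleton_self _)

lemma insert_succ_ne_singleton {P : SP n} {B : Finset ℕ} (hB : B ∈ P.parts) :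
    insert (n + 1) B ≠ {n + 1} := fun h => by
  obtain ⟨b, hb⟩ := P.nonempty_of_mem_parts hB
  have hb' := mem_singleton.1 (h ▸ mem_insert_of_mem hb)
  exact succ_notMem_part hB (hb' ▸ hb)

lemma eraseLast_addSingleton (P : SP n) : eraseLast (addSingleton P) = P := by
  ext D
  rw [mem_eraseLast_parts, parts_addSingleton]
  constructor
  · rintro ⟨d, hd, hne, rfl⟩
    rcases mem_insert.1 hd with rfl | hd
    · exact absurd rfl hne
    · rwa [erase_succ_of_mem_parts hd]
  · intro hD
    exact ⟨D, mem_insert_of_mem hD, ne_singleton_succ_of_mem_parts hD,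
      erase_succ_of_mem_parts hD⟩

lemma eraseLast_extendBlock (P : SP n) {B : Finset ℕ} (hB : B ∈ P.parts) :
    eraseLast (extendBlock P B hB) = P := by
  ext D
  rw [mem_eraseLast_parts, parts_extendBlock]
  constructor
  · rintro ⟨d, hd, -, rfl⟩
    rcases mem_insert.1 hd with rfl | hd
    · rwa [erase_insert (succ_notMem_part hB)]
    · rw [erase_succ_of_mem_parts (mem_of_mem_erase hd)]
      exact mem_of_mem_erase hd
  · intro hD
    by_cases hDB : D = B
    · subst hDB
      exact ⟨insert (n + 1) D, mem_insert_self _ _, insert_succ_ne_singleton hD,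
        erase_insert (succ_notMem_part hD)⟩
    · exact ⟨D, mem_insert_of_mem (mem_erase.2 ⟨hDB, hD⟩),
        ne_singleton_succ_of_mem_parts hD, erase_succ_of_mem_parts hD⟩

lemma succ_mem_Icc : n + 1 ∈ Finset.Icc 1 (n + 1) := by simp

lemma succ_notMem_of_ne_part {P' : SP (n + 1)} {D : Finset ℕ} (hD : D ∈ P'.parts)
    (hne : D ≠ P'.part (n + 1)) : n + 1 ∉ D :=
  fun h => hne (P'.part_eq_of_mem hD h).symm

lemma mem_eraseLast_of_ne_part {P' : SP (n + 1)} {D : Finset ℕ} (hD : D ∈ P'.parts)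
    (hne : D ≠ P'.part (n + 1)) : D ∈ (eraseLast P').parts :=
  mem_eraseLast_parts.2 ⟨D, hD, fun h => succ_notMem_of_ne_part hD hne (h ▸ mem_singleton_self _),
    erase_eq_of_notMem (succ_notMem_of_ne_part hD hne)⟩

lemma addSingleton_eraseLast {P' : SP (n + 1)} (h : P'.part (n + 1) = {n + 1}) :
    addSingleton (eraseLast P') = P' := by
  ext D
  rw [parts_addSingleton, mem_insert]
  constructor
  · rintro (rfl | hD)
    · exact h ▸ P'.part_mem.2 succ_mem_Icc
    · obtain ⟨d, hd, hne, rfl⟩ := mem_eraseLast_parts.1 hD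
      rwa [erase_eq_of_notMem (succ_notMem_of_ne_part hd (h ▸ hne))]
  · intro hD
    by_cases hDs : D = {n + 1}
    · exact Or.inl hDs
    · exact Or.inr (mem_eraseLast_of_ne_part hD (h ▸ hDs))

lemma erase_part_succ_mem_eraseLast {P' : SP (n + 1)} (h : P'.part (n + 1) ≠ {n + 1}) :
    (P'.part (n + 1)).erase (n + 1) ∈ (eraseLast P').parts :=
  mem_eraseLast_parts.2 ⟨P'.part (n + 1), P'.part_mem.2 succ_mem_Icc, h, rfl⟩

lemma extendBlock_eraseLast {P' : SP (n + 1)} (h : P'.part (n + 1) ≠ {n + 1}) :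
    extendBlock (eraseLast P') _ (erase_part_succ_mem_eraseLast h) = P' := by
  set T := P'.part (n + 1)
  have hT : T ∈ P'.parts := P'.part_mem.2 succ_mem_Icc
  ext D
  rw [parts_extendBlock, insert_erase (P'.mem_part succ_mem_Icc), mem_insert,
    mem_erase]
  constructor
  · rintro (rfl | ⟨hne, hD⟩)
    · exact hT
    · obtain ⟨d, hd, -, rfl⟩ := mem_eraseLast_parts.1 hD
      have hdT : d ≠ T := by rintro rfl; exact hne rfl
      rwa [erase_eq_of_notMem (succ_notMem_of_ne_part hd hdT)]
  · intro hD
    by_cases hDT : D = T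
    · exact Or.inl hDT
    · refine Or.inr ⟨fun hc => hDT ?_, mem_eraseLast_of_ne_part hD hDT⟩
      obtain ⟨x, hx⟩ := P'.nonempty_of_mem_parts hD
      exact P'.eq_of_mem_parts hD hT hx (mem_of_mem_erase (hc ▸ hx))

lemma part_succ_addSingleton (P : SP n) : (addSingleton P).part (n + 1) = {n + 1} :=
  Finpartition.part_eq_of_mem _ (mem_insert_self _ _) (mem_singleton_self _)

lemma part_succ_extendBlock (P : SP n) {B : Finset ℕ} (hB : B ∈ P.parts) :
    (extendBlock P B hB).part (n + 1) = insert (n + 1) B :=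
  Finpartition.part_eq_of_mem _ (mem_insert_self _ _) (mem_insert_self _ _)

def grow (P : SP n) : Option {B // B ∈ P.parts} → SP (n + 1)
  | none => addSingleton P
  | some B => extendBlock P B.1 B.2

lemma eraseLast_grow (P : SP n) : ∀ o, eraseLast (grow P o) = P
  | none => eraseLast_addSingleton P
  | some B => eraseLast_extendBlock P B.2

lemma exists_grow_eraseLast (P' : SP (n + 1)) : ∃ o, grow (eraseLast P') o = P' := by
  by_cases h : P'.part (n + 1) = {n + 1}
  · exact ⟨none, addSingleton_eraseLast h⟩
  · exact ⟨some ⟨_, erase_part_succ_mem_eraseLast h⟩, extendBlock_eraseLast h⟩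

lemma grow_injective (P : SP n) : Function.Injective (grow P) := by
  intro o o' h
  have hpart := congrArg (fun Q : SP (n + 1) => Q.part (n + 1)) h
  rcases o with _ | B <;> rcases o' with _ | B' <;>
    simp only [grow, part_succ_addSingleton, part_succ_extendBlock] at hpart
  · rfl
  · exact absurd hpart.symm (insert_succ_ne_singleton B'.2)
  · exact absurd hpart (insert_succ_ne_singleton B.2)
  · have : B.1 = B'.1 := by
      simpa [erase_insert (succ_notMem_part B.2), erase_insert (succ_notMem_part B'.2)]
        using congrArg (fun D : Finset ℕ => D.erase (n + 1)) hpart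
    rw [Subtype.ext this]

end Growth

/-- A class of set partitions with a generating tree: `n + 1` can be added to a `good` partition of
`[n]` as a singleton or into exactly its `active` blocks, and the number of active blocks of the
child follows `succLabel`, active blocks being ranked by `key`. -/
structure PartitionGrowth where
  good : ∀ {n}, SP n → Prop
  active : ∀ {n}, SP n → Finset (Finset ℕ)
  key : Finset ℕ → ℕ
  active_subset : ∀ {n} (P : SP n), active P ⊆ P.parts
  key_injOn : ∀ {n} (P : SP n), Set.InjOn key (active P)
  good_zero : ∀ P : SP 0, good P
  good_addSingleton : ∀ {n} (P : SP n), good (addSingleton P) ↔ good P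
  good_extendBlock : ∀ {n} (P : SP n) {B} (hB : B ∈ P.parts),
    good (extendBlock P B hB) ↔ good P ∧ B ∈ active P
  card_active_addSingleton : ∀ {n} (P : SP n), #(active (addSingleton P)) = #(active P) + 1
  card_active_extendBlock : ∀ {n} (P : SP n) {B} (hB : B ∈ active P),
    #(active (extendBlock P B (active_subset P hB)))
      = succLabel #(active P) (some (rankEquiv _ key (key_injOn P) ⟨B, hB⟩))

namespace PartitionGrowth

variable (G : PartitionGrowth) {n : ℕ}

lemma good_grow (P : SP n) (o : Option {B // B ∈ P.parts}) :
    G.good (grow P o) ↔ G.good P ∧ ∀ B ∈ o, B.1 ∈ G.active P := by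
  rcases o with _ | ⟨B, hB⟩
  · exact (G.good_addSingleton P).trans (by simp)
  · exact (G.good_extendBlock P hB).trans (by simp)

def child (x : Σ P : {P : SP n // G.good P}, Option {B // B ∈ G.active P.1}) :
    {P : SP (n + 1) // G.good P} :=
  ⟨grow x.1.1 (x.2.map (Subtype.map id fun _ hB => G.active_subset _ hB)),
    (G.good_grow _ _).2 ⟨x.1.2, by
    rintro _ hB
    obtain ⟨B, -, rfl⟩ := Option.mem_map.1 hB
    exact B.2⟩⟩

lemma child_bijective : Function.Bijective (G.child (n := n)) := by
  constructor
  · rintro ⟨⟨P, hP⟩, o⟩ ⟨⟨Q, hQ⟩, o'⟩ h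
    have h' : grow P _ = grow Q _ := congrArg Subtype.val h
    obtain rfl : P = Q := by simpa only [eraseLast_grow] using congrArg eraseLast h'
    obtain rfl := Option.map_injective (Subtype.map_injective _ Function.injective_id)
      (grow_injective P h')
    rfl
  · rintro ⟨P', hP'⟩
    obtain ⟨o, hgrow⟩ := exists_grow_eraseLast P'
    obtain ⟨hP, ho⟩ := (G.good_grow _ _).1 (hgrow ▸ hP')
    refine ⟨⟨⟨_, hP⟩, o.pmap (fun B hB => ⟨B.1, hB⟩) ho⟩, Subtype.ext (Eq.trans ?_ hgrow)⟩
    rcases o with _ | B <;> rfl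

noncomputable def childEquiv (n : ℕ) :
    (Σ P : {P : SP n // G.good P}, Option (Fin #(G.active P.1))) ≃
      {P : SP (n + 1) // G.good P} :=
  (Equiv.sigmaCongrRight fun P : {P : SP n // G.good P} =>
    Equiv.optionCongr (rankEquiv _ G.key (G.key_injOn P.1)).symm).trans
    (Equiv.ofBijective _ G.child_bijective)

lemma card_active_childEquiv (P : {P : SP n // G.good P}) (o : Option (Fin #(G.active P.1))) :
    #(G.active (G.childEquiv n ⟨P, o⟩).1) = succLabel #(G.active P.1) o := by
  rcases o with _ | i
  · exact G.card_active_addSingleton P.1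
  · obtain ⟨B, rfl⟩ := (rankEquiv _ G.key (G.key_injOn P.1)).surjective i
    simp only [childEquiv, child, Equiv.trans_apply, Equiv.sigmaCongrRight_apply,
      Equiv.optionCongr_apply, Option.map_some, Equiv.symm_apply_apply, Equiv.ofBijective_apply]
    exact G.card_active_extendBlock P.1 B.2

lemma active_eq_empty (P : SP 0) : G.active P = ∅ :=
  subset_empty.1 <| (G.active_subset P).trans_eq <|
    Finpartition.parts_eq_empty_iff.2 (Finset.Icc_eq_empty (by omega))

theorem card_good_eq (G H : PartitionGrowth) (n : ℕ) :
    Nat.card {P : SP n // G.good P} = Nat.card {P : SP n // H.good P} := by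
  obtain ⟨e, -⟩ := exists_labelEquiv_of_same_rule succLabel
    (X := fun n => {P : SP n // G.good P}) (Y := fun n => {P : SP n // H.good P})
    (fun P => #(G.active P.1)) (fun P => #(H.active P.1))
    ((Equiv.subtypeUnivEquiv G.good_zero).trans (Equiv.subtypeUnivEquiv H.good_zero).symm)
    (fun P => by simp [active_eq_empty])
    G.childEquiv (fun _ => G.card_active_childEquiv)
    H.childEquiv (fun _ => H.card_active_childEquiv) n
  exact Nat.card_congr e

end PartitionGrowth

section Noncrossing

open Classical

variable {n : ℕ} {P : SP n} {B : Finset ℕ}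

def IsArc (P : SP n) (i j : ℕ) : Prop :=
  i < j ∧ ∃ B ∈ P.parts, i ∈ B ∧ j ∈ B ∧ ∀ m ∈ B, ¬(i < m ∧ m < j)

lemma IsArc.bounds {i j : ℕ} (h : IsArc P i j) : 1 ≤ i ∧ i < j ∧ j ≤ n := by
  obtain ⟨hij, B, hB, hi, hj, -⟩ := h
  exact ⟨one_le_of_mem_part hB hi, hij, le_of_mem_part hB hj⟩

def TwoNoncrossing (P : SP n) : Prop :=
  ∀ i₁ j₁ i₂ j₂, IsArc P i₁ j₁ → IsArc P i₂ j₂ → ¬ CrossPair 2 (i₁, j₁) (i₂, j₂)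

/-- Loops have `i = j`, so they cannot take part in a crossing with `j₁ - i₂ ≥ 2`. -/
lemma isArc_of_isEdge_of_crossPair {i₁ j₁ i₂ j₂ : ℕ} (h₁ : IsEdge P i₁ j₁) (h₂ : IsEdge P i₂ j₂)
    (hc : CrossPair 2 (i₁, j₁) (i₂, j₂)) : IsArc P i₁ j₁ ∧ IsArc P i₂ j₂ := by
  obtain ⟨c₁, c₂, c₃, c₄⟩ := hc
  dsimp only at c₁ c₂ c₃ c₄
  refine ⟨h₁.resolve_left ?_, h₂.resolve_left ?_⟩ <;> rintro ⟨rfl, -⟩ <;> omega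

lemma dcr_two_eq_zero_iff : dcr 2 P = 0 ↔ TwoNoncrossing P := by
  have hfin : {p : (ℕ × ℕ) × ℕ × ℕ |
      IsEdge P p.1.1 p.1.2 ∧ IsEdge P p.2.1 p.2.2 ∧ CrossPair 2 p.1 p.2}.Finite := by
    refine (Set.finite_Icc ((0, 0), (0, 0)) ((n, n), (n, n))).subset ?_
    rintro ⟨⟨i₁, j₁⟩, ⟨i₂, j₂⟩⟩ ⟨h₁, h₂, hc⟩
    dsimp only at h₁ h₂ hc
    obtain ⟨e₁, e₂⟩ := isArc_of_isEdge_of_crossPair h₁ h₂ hc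
    have := e₁.bounds
    have := e₂.bounds
    simp only [Set.mem_Icc, Prod.mk_le_mk]
    omega
  rw [dcr, Set.ncard_eq_zero hfin, Set.eq_empty_iff_forall_notMem]
  constructor
  · intro h i₁ j₁ i₂ j₂ h₁ h₂ hc
    exact h ((i₁, j₁), (i₂, j₂)) ⟨Or.inr h₁, Or.inr h₂, hc⟩
  · rintro h ⟨⟨i₁, j₁⟩, ⟨i₂, j₂⟩⟩ ⟨h₁, h₂, hc⟩
    obtain ⟨e₁, e₂⟩ := isArc_of_isEdge_of_crossPair h₁ h₂ hc
    exact h _ _ _ _ e₁ e₂ hc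

lemma isArc_addSingleton {i j : ℕ} : IsArc (addSingleton P) i j ↔ IsArc P i j := by
  refine ⟨fun ⟨hij, D, hD, hi, hj, hD'⟩ => ?_, fun ⟨hij, D, hD, h⟩ =>
    ⟨hij, D, mem_insert_of_mem hD, h⟩⟩
  rcases mem_insert.1 hD with rfl | hD
  · rw [mem_singleton] at hi hj; omega
  · exact ⟨hij, D, hD, hi, hj, hD'⟩

lemma isArc_extendBlock (hB : B ∈ P.parts) {i j : ℕ} :
    IsArc (extendBlock P B hB) i j ↔ IsArc P i j ∨ (i = blockMax B ∧ j = n + 1) := by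
  have hBne := P.nonempty_of_mem_parts hB
  have hmax := blockMax_le hB
  constructor
  · rintro ⟨hij, D, hD, hi, hj, hgap⟩
    rcases mem_insert.1 hD with rfl | hD
    · have hle : ∀ m ∈ insert (n + 1) B, m ≤ n + 1 := fun m hm =>
        (mem_insert.1 hm).elim le_of_eq fun hm => (le_of_mem_part hB hm).trans n.le_succ
      have hiB : i ∈ B := (mem_insert.1 hi).resolve_left (by have := hle j hj; omega)
      by_cases hjn : j = n + 1
      · refine Or.inr ⟨(le_blockMax hiB).eq_of_not_lt fun hlt => ?_, hjn⟩
        exact hgap _ (mem_insert_of_mem (blockMax_mem hBne)) ⟨hlt, by omega⟩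
      · exact Or.inl ⟨hij, B, hB, hiB, (mem_insert.1 hj).resolve_left hjn,
          fun m hm => hgap m (mem_insert_of_mem hm)⟩
    · exact Or.inl ⟨hij, D, mem_of_mem_erase hD, hi, hj, hgap⟩
  · rintro (⟨hij, D, hD, hi, hj, hgap⟩ | ⟨rfl, rfl⟩)
    · by_cases hDB : D = B
      · subst hDB
        refine ⟨hij, insert (n + 1) D, mem_insert_self _ _,
          mem_insert_of_mem hi, mem_insert_of_mem hj, fun m hm => ?_⟩
        rcases mem_insert.1 hm with rfl | hm
        · have := le_of_mem_part hB hj; omega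
        · exact hgap m hm
      · exact ⟨hij, D, mem_insert_of_mem (mem_erase.2 ⟨hDB, hD⟩), hi, hj, hgap⟩
    · refine ⟨by omega, insert (n + 1) B, mem_insert_self _ _,
        mem_insert_of_mem (blockMax_mem hBne), mem_insert_self _ _, fun m hm => ?_⟩
      rcases mem_insert.1 hm with rfl | hm
      · omega
      · have := le_blockMax hm; omega

/-- The arc that joins the maximum of `B` to a new last point `n + 1` is not 2-distantly crossed. -/
def ExtendsNoncrossing (P : SP n) (B : Finset ℕ) : Prop :=
  ∀ i j, IsArc P i j → i < blockMax B → blockMax B ≤ j → j < blockMax B + 2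

lemma twoNoncrossing_addSingleton : TwoNoncrossing (addSingleton P) ↔ TwoNoncrossing P := by
  simp only [TwoNoncrossing, isArc_addSingleton]

lemma twoNoncrossing_extendBlock (hB : B ∈ P.parts) :
    TwoNoncrossing (extendBlock P B hB) ↔ TwoNoncrossing P ∧ ExtendsNoncrossing P B := by
  have hmax := blockMax_le hB
  simp only [TwoNoncrossing, isArc_extendBlock hB]
  constructor
  · intro h
    refine ⟨fun i₁ j₁ i₂ j₂ h₁ h₂ => h _ _ _ _ (Or.inl h₁) (Or.inl h₂), fun i j hij hi hj => ?_⟩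
    by_contra hc
    have := hij.bounds
    exact h i j _ _ (Or.inl hij) (Or.inr ⟨rfl, rfl⟩) ⟨hi, hj, by omega, by dsimp only; omega⟩
  · rintro ⟨hnc, hext⟩ i₁ j₁ i₂ j₂ h₁ h₂ ⟨c₁, c₂, c₃, c₄⟩
    dsimp only at c₁ c₂ c₃ c₄
    rcases h₁ with e₁ | ⟨rfl, rfl⟩ <;> rcases h₂ with e₂ | ⟨rfl, rfl⟩
    · exact hnc _ _ _ _ e₁ e₂ ⟨c₁, c₂, c₃, c₄⟩
    · have := hext _ _ e₁ c₁ c₂; omega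
    · have := e₂.bounds; omega
    · omega

noncomputable def activeNC (P : SP n) : Finset (Finset ℕ) := {B ∈ P.parts | ExtendsNoncrossing P B}

lemma extendsNoncrossing_of_le_blockMax {D : Finset ℕ} (h : n ≤ blockMax D) :
    ExtendsNoncrossing P D := fun i j hij hi hj => by
  have := hij.bounds; omega

lemma activeNC_addSingleton : activeNC (addSingleton P) = insert {n + 1} (activeNC P) := by
  have hsame : ∀ D, ExtendsNoncrossing (addSingleton P) D ↔ ExtendsNoncrossing P D := by
    simp only [ExtendsNoncrossing, isArc_addSingleton, implies_true]
  ext D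
  simp only [activeNC, mem_filter, mem_insert, parts_addSingleton, hsame]
  constructor
  · rintro ⟨rfl | hD, hE⟩
    exacts [Or.inl rfl, Or.inr ⟨hD, hE⟩]
  · rintro (rfl | ⟨hD, hE⟩)
    · exact ⟨Or.inl rfl, extendsNoncrossing_of_le_blockMax (by rw [blockMax_singleton]; omega)⟩
    · exact ⟨Or.inr hD, hE⟩

lemma card_activeNC_addSingleton : #(activeNC (addSingleton P)) = #(activeNC P) + 1 := by
  rw [activeNC_addSingleton, card_insert_of_notMem]
  exact fun h => ne_singleton_succ_of_mem_parts (mem_filter.1 h).1 rfl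

lemma extendsNoncrossing_extendBlock_of_ne (hB : B ∈ P.parts) {D : Finset ℕ} (hD : D ∈ P.parts)
    (hDB : D ≠ B) : ExtendsNoncrossing (extendBlock P B hB) D ↔
      ExtendsNoncrossing P D ∧ (blockMax D < blockMax B ∨ blockMax D = n) := by
  have hne : blockMax D ≠ blockMax B := fun h => hDB (blockMax_injOn P hD hB h)
  have hDn := blockMax_le hD
  simp only [ExtendsNoncrossing, isArc_extendBlock hB]
  constructor
  · intro h
    refine ⟨fun i j hij => h i j (Or.inl hij), ?_⟩
    by_contra! hc
    have := h _ _ (Or.inr ⟨rfl, rfl⟩) (by omega) (by omega)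
    omega
  · rintro ⟨hE, hor⟩ i j (hij | ⟨rfl, rfl⟩)
    · exact hE i j hij
    · omega

lemma part_last_mem_parts (hn : 1 ≤ n) : P.part n ∈ P.parts :=
  P.part_mem.2 (mem_Icc.2 ⟨hn, le_rfl⟩)

lemma blockMax_part_last (hn : 1 ≤ n) : blockMax (P.part n) = n :=
  le_antisymm (blockMax_le (part_last_mem_parts hn))
    (le_blockMax (P.mem_part (mem_Icc.2 ⟨hn, le_rfl⟩)))

lemma activeNC_extendBlock (hB : B ∈ P.parts) :
    activeNC (extendBlock P B hB) = insert (insert (n + 1) B)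
      {D ∈ activeNC P | D ≠ B ∧ (blockMax D < blockMax B ∨ D = P.part n)} := by
  have hn := one_le_of_mem_parts hB
  ext D
  simp only [activeNC, mem_filter, mem_insert, parts_extendBlock, mem_erase]
  constructor
  · rintro ⟨rfl | ⟨hDB, hD⟩, hE⟩
    · exact Or.inl rfl
    · obtain ⟨hE, hor⟩ := (extendsNoncrossing_extendBlock_of_ne hB hD hDB).1 hE
      refine Or.inr ⟨⟨hD, hE⟩, hDB, hor.imp_right fun h => ?_⟩
      exact blockMax_injOn P hD (part_last_mem_parts hn) (h.trans (blockMax_part_last hn).symm)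
  · rintro (rfl | ⟨⟨hD, hE⟩, hDB, hor⟩)
    · refine ⟨Or.inl rfl, extendsNoncrossing_of_le_blockMax ?_⟩
      rw [blockMax_insert_succ hB]
    · refine ⟨Or.inr ⟨hDB, hD⟩, (extendsNoncrossing_extendBlock_of_ne hB hD hDB).2 ⟨hE, ?_⟩⟩
      exact hor.imp_right fun h : D = P.part n => h ▸ blockMax_part_last hn

lemma blockMax_injOn_activeNC (P : SP n) : Set.InjOn blockMax (activeNC P) :=
  (blockMax_injOn P).mono (filter_subset _ _)

lemma card_activeNC_extendBlock (hB : B ∈ activeNC P) :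
    #(activeNC (extendBlock P B (mem_filter.1 hB).1)) = succLabel #(activeNC P)
      (some (rankEquiv _ blockMax (blockMax_injOn_activeNC P) ⟨B, hB⟩)) := by
  have hBp := (mem_filter.1 hB).1
  have hn := one_le_of_mem_parts hBp
  have hT : P.part n ∈ activeNC P := mem_filter.2 ⟨part_last_mem_parts hn,
    extendsNoncrossing_of_le_blockMax (blockMax_part_last hn).ge⟩
  rw [activeNC_extendBlock hBp]
  refine card_insert_filter_eq_succLabel _ _ _ hB hT (fun D hD => ?_) fun h => ?_
  · exact (blockMax_part_last hn).symm ▸ blockMax_le (mem_filter.1 hD).1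
  · exact succ_notMem_part (mem_filter.1 h).1 (mem_insert_self _ _)

lemma twoNoncrossing_zero (P : SP 0) : TwoNoncrossing P := fun _ _ _ _ h => by
  have := h.bounds; omega

noncomputable def noncrossingGrowth : PartitionGrowth where
  good := TwoNoncrossing
  active := activeNC
  key := blockMax
  active_subset _ := filter_subset _ _
  key_injOn := blockMax_injOn_activeNC
  good_zero := twoNoncrossing_zero
  good_addSingleton _ := twoNoncrossing_addSingleton
  good_extendBlock _ _ hB := by rw [twoNoncrossing_extendBlock hB, activeNC, mem_filter]; simp [hB]
  card_active_addSingleton _ := card_activeNC_addSingleton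
  card_active_extendBlock _ _ hB := card_activeNC_extendBlock hB

end Noncrossing

section Avoiding

open Classical

variable {n : ℕ} {P : SP n} {B : Finset ℕ}

/-- An occurrence of `1231` ending before `e`, with `B` the block of the letter `2`. -/
def Has1231Before (P : SP n) (B : Finset ℕ) (e : ℕ) : Prop :=
  ∃ A ∈ P.parts, ∃ C ∈ P.parts, ∃ a b c d : ℕ, a ∈ A ∧ d ∈ A ∧ b ∈ B ∧ c ∈ C ∧
    a < b ∧ b < c ∧ c < d ∧ d < e ∧ blockMin A < blockMin B ∧ blockMin B < blockMin C

def Contains12312 (P : SP n) : Prop := ∃ B ∈ P.parts, ∃ e ∈ B, Has1231Before P B e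

lemma exists_forall_lt_iff_blockMin_lt {A C : Finset ℕ} (hA : A.Nonempty) (hC : C.Nonempty) :
    (∃ x ∈ A, ∀ y ∈ C, x < y) ↔ blockMin A < blockMin C :=
  ⟨fun ⟨_, hx, h⟩ => (blockMin_le hx).trans_lt (h _ (blockMin_mem hC)), fun h =>
    ⟨blockMin A, blockMin_mem hA, fun _ hy => h.trans_le (blockMin_le hy)⟩⟩

lemma avoids12312_iff : Avoids12312 P ↔ ¬ Contains12312 P := by
  have hmin : ∀ {A C}, A ∈ P.parts → C ∈ P.parts →
      ((∃ x ∈ A, ∀ y ∈ C, x < y) ↔ blockMin A < blockMin C) := fun hA hC =>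
    exists_forall_lt_iff_blockMin_lt (P.nonempty_of_mem_parts hA) (P.nonempty_of_mem_parts hC)
  refine not_congr ⟨?_, ?_⟩
  · rintro ⟨a, b, c, d, e, hab, hbc, hcd, hde, A, hA, B, hB, C, hC, ha, hd, hb, he, hc, hAB, hBC⟩
    exact ⟨B, hB, e, he, A, hA, C, hC, a, b, c, d, ha, hd, hb, hc, hab, hbc, hcd, hde,
      (hmin hA hB).1 hAB, (hmin hB hC).1 hBC⟩
  · rintro ⟨B, hB, e, he, A, hA, C, hC, a, b, c, d, ha, hd, hb, hc, hab, hbc, hcd, hde, hAB, hBC⟩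
    exact ⟨a, b, c, d, e, hab, hbc, hcd, hde, A, hA, B, hB, C, hC, ha, hd, hb, he, hc,
      (hmin hA hB).2 hAB, (hmin hB hC).2 hBC⟩

lemma blockMin_erase_succ {P' : SP (n + 1)} {D : Finset ℕ} (hD : D ∈ P'.parts)
    (hne : D ≠ {n + 1}) : blockMin (D.erase (n + 1)) = blockMin D := by
  by_cases h : n + 1 ∈ D
  · have hne' : (D.erase (n + 1)).Nonempty := by
      rw [nonempty_iff_ne_empty, Ne, erase_eq_empty_iff, not_or]
      exact ⟨(P'.nonempty_of_mem_parts hD).ne_empty, hne⟩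
    conv_rhs => rw [← insert_erase h]
    exact (blockMin_insert_of_le hne' fun b hb =>
      le_of_mem_part hD (mem_of_mem_erase hb)).symm
  · rw [erase_eq_of_notMem h]

/-- Occurrences before `e ≤ n + 1` only involve elements of `[n]`. -/
lemma has1231Before_eraseLast_iff {P' : SP (n + 1)} {D : Finset ℕ} (hD : D ∈ P'.parts)
    (hne : D ≠ {n + 1}) {e : ℕ} (he : e ≤ n + 1) :
    Has1231Before (eraseLast P') (D.erase (n + 1)) e ↔ Has1231Before P' D e := by
  simp only [Has1231Before, blockMin_erase_succ hD hne]
  constructor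
  · rintro ⟨A, hA, C, hC, a, b, c, d, ha, hd, hb, hc, hab, hbc, hcd, hde, hAB, hBC⟩
    obtain ⟨A', hA', hA'ne, rfl⟩ := mem_eraseLast_parts.1 hA
    obtain ⟨C', hC', hC'ne, rfl⟩ := mem_eraseLast_parts.1 hC
    rw [blockMin_erase_succ hA' hA'ne] at hAB
    rw [blockMin_erase_succ hC' hC'ne] at hBC
    exact ⟨A', hA', C', hC', a, b, c, d, mem_of_mem_erase ha, mem_of_mem_erase hd,
      mem_of_mem_erase hb, mem_of_mem_erase hc, hab, hbc, hcd, hde, hAB, hBC⟩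
  · rintro ⟨A, hA, C, hC, a, b, c, d, ha, hd, hb, hc, hab, hbc, hcd, hde, hAB, hBC⟩
    have hAne : A ≠ {n + 1} := by rintro rfl; simp at ha hd; omega
    have hCne : C ≠ {n + 1} := by rintro rfl; simp at hc; omega
    refine ⟨A.erase (n + 1), mem_eraseLast_parts.2 ⟨A, hA, hAne, rfl⟩,
      C.erase (n + 1), mem_eraseLast_parts.2 ⟨C, hC, hCne, rfl⟩, a, b, c, d,
      mem_erase.2 ⟨by omega, ha⟩, mem_erase.2 ⟨by omega, hd⟩,
      mem_erase.2 ⟨by omega, hb⟩, mem_erase.2 ⟨by omega, hc⟩,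
      hab, hbc, hcd, hde, ?_, ?_⟩
    · rwa [blockMin_erase_succ hA hAne]
    · rwa [blockMin_erase_succ hC hCne]

/-- An occurrence of `12312` in a partition of `[n + 1]` either avoids `n + 1`, or uses it as the
final letter `2`. -/
lemma contains12312_iff_eraseLast (P' : SP (n + 1)) :
    Contains12312 P' ↔
      Contains12312 (eraseLast P') ∨ Has1231Before P' (P'.part (n + 1)) (n + 1) := by
  constructor
  · rintro ⟨B, hB, e, he, hpat⟩
    have hne : B ≠ {n + 1} := by
      rintro rfl
      obtain ⟨-, -, -, -, -, b, c, d, -, -, hb, -, -, hbc, hcd, hde, -⟩ := hpat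
      simp only [mem_singleton] at hb he
      omega
    rcases (le_of_mem_part hB he).lt_or_eq with hlt | rfl
    · exact Or.inl ⟨B.erase (n + 1), mem_eraseLast_parts.2 ⟨B, hB, hne, rfl⟩, e,
        mem_erase.2 ⟨hlt.ne, he⟩, (has1231Before_eraseLast_iff hB hne hlt.le).2 hpat⟩
    · exact Or.inr (P'.part_eq_of_mem hB he ▸ hpat)
  · rintro (⟨B, hB, e, he, hpat⟩ | hpat)
    · obtain ⟨B, hB', hne, rfl⟩ := mem_eraseLast_parts.1 hB
      exact ⟨B, hB', e, mem_of_mem_erase he, (has1231Before_eraseLast_iff hB' hne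
        ((le_of_mem_part hB he).trans n.le_succ)).1 hpat⟩
    · exact ⟨_, P'.part_mem.2 succ_mem_Icc, n + 1, P'.mem_part succ_mem_Icc, hpat⟩

lemma contains12312_addSingleton : Contains12312 (addSingleton P) ↔ Contains12312 P := by
  rw [contains12312_iff_eraseLast, eraseLast_addSingleton, part_succ_addSingleton, or_iff_left]
  rintro ⟨-, -, -, -, -, b, c, d, -, -, hb, hc, -, hbc, hcd, hde, -⟩
  rw [mem_singleton] at hb
  omega

lemma contains12312_extendBlock (hB : B ∈ P.parts) :
    Contains12312 (extendBlock P B hB) ↔ Contains12312 P ∨ Has1231Before P B (n + 1) := by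
  have hT := part_succ_extendBlock P hB
  have hpat := has1231Before_eraseLast_iff (hT ▸ (extendBlock P B hB).part_mem.2 succ_mem_Icc)
    (insert_succ_ne_singleton hB) le_rfl
  rw [erase_insert (succ_notMem_part hB), eraseLast_extendBlock] at hpat
  rw [contains12312_iff_eraseLast, eraseLast_extendBlock, hT, hpat]

/-- Putting `n + 1` into `B` completes no occurrence of `12312`. -/
def ExtendsAvoiding (P : SP n) (B : Finset ℕ) : Prop := ¬ Has1231Before P B (n + 1)

/-- A new occurrence of `1231` must use `n + 1` as its last letter, and then only the minima of
the blocks matter. -/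
lemma extendsAvoiding_iff_eraseLast {P' : SP (n + 1)} {D : Finset ℕ} (hD : D ∈ P'.parts)
    (hne : D ≠ {n + 1}) :
    ExtendsAvoiding P' D ↔ ExtendsAvoiding (eraseLast P') (D.erase (n + 1)) ∧
      ¬(blockMin (P'.part (n + 1)) < blockMin D ∧ ∃ C ∈ P'.parts, blockMin D < blockMin C) := by
  set T := P'.part (n + 1)
  have hT : T ∈ P'.parts := P'.part_mem.2 succ_mem_Icc
  rw [ExtendsAvoiding, ExtendsAvoiding, has1231Before_eraseLast_iff hD hne le_rfl, ← not_or,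
    not_iff_not]
  constructor
  · rintro ⟨A, hA, C, hC, a, b, c, d, ha, hd, hb, hc, hab, hbc, hcd, hde, hAB, hBC⟩
    rcases (Nat.lt_succ_iff.1 hde).lt_or_eq with hlt | rfl
    · exact Or.inl ⟨A, hA, C, hC, a, b, c, d, ha, hd, hb, hc, hab, hbc, hcd, hlt, hAB, hBC⟩
    · rw [← show T = A from P'.part_eq_of_mem hA hd] at hAB
      exact Or.inr ⟨hAB, C, hC, hBC⟩
  · rintro (⟨A, hA, C, hC, a, b, c, d, ha, hd, hb, hc, hab, hbc, hcd, hde, hAB, hBC⟩ |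
      ⟨hTD, C, hC, hDC⟩)
    · exact ⟨A, hA, C, hC, a, b, c, d, ha, hd, hb, hc, hab, hbc, hcd, by omega, hAB, hBC⟩
    · have hCmin := blockMin_mem (P'.nonempty_of_mem_parts hC)
      have hCT : blockMin C ≠ n + 1 := by
        intro h
        rw [← show T = C from P'.part_eq_of_mem hC (h ▸ hCmin)] at hDC
        omega
      refine ⟨T, hT, C, hC, blockMin T, blockMin D, blockMin C, n + 1,
        blockMin_mem (P'.nonempty_of_mem_parts hT), P'.mem_part succ_mem_Icc,
        blockMin_mem (P'.nonempty_of_mem_parts hD), hCmin, hTD, hDC, ?_, by omega, hTD, hDC⟩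
      have := le_of_mem_part hC hCmin
      omega

lemma extendsAvoiding_addSingleton {D : Finset ℕ} (hD : D ∈ P.parts) :
    ExtendsAvoiding (addSingleton P) D ↔ ExtendsAvoiding P D := by
  rw [extendsAvoiding_iff_eraseLast (mem_insert_of_mem hD) (ne_singleton_succ_of_mem_parts hD),
    eraseLast_addSingleton, erase_succ_of_mem_parts hD, part_succ_addSingleton, blockMin_singleton,
    and_iff_left]
  have := le_of_mem_part hD (blockMin_mem (P.nonempty_of_mem_parts hD))
  omega

lemma extendsAvoiding_extendBlock_self (hB : B ∈ P.parts) :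
    ExtendsAvoiding (extendBlock P B hB) (insert (n + 1) B) ↔ ExtendsAvoiding P B := by
  rw [extendsAvoiding_iff_eraseLast (mem_insert_self _ _) (insert_succ_ne_singleton hB),
    eraseLast_extendBlock, erase_insert (succ_notMem_part hB), part_succ_extendBlock,
    and_iff_left]
  exact fun h => lt_irrefl _ h.1

lemma exists_lt_blockMin_extendBlock_iff (hB : B ∈ P.parts) {m : ℕ} :
    (∃ C ∈ (extendBlock P B hB).parts, m < blockMin C) ↔ ∃ C ∈ P.parts, m < blockMin C := by
  simp only [parts_extendBlock, exists_mem_insert, blockMin_insert_succ hB,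
    mem_erase]
  constructor
  · rintro (h | ⟨C, ⟨-, hC⟩, h⟩)
    exacts [⟨B, hB, h⟩, ⟨C, hC, h⟩]
  · rintro ⟨C, hC, h⟩
    by_cases hCB : C = B
    · exact Or.inl (hCB ▸ h)
    · exact Or.inr ⟨C, ⟨hCB, hC⟩, h⟩

lemma extendsAvoiding_extendBlock_of_ne (hB : B ∈ P.parts) {D : Finset ℕ} (hD : D ∈ P.parts)
    (hDB : D ≠ B) : ExtendsAvoiding (extendBlock P B hB) D ↔ ExtendsAvoiding P D ∧
      ¬(blockMin B < blockMin D ∧ ∃ C ∈ P.parts, blockMin D < blockMin C) := by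
  rw [extendsAvoiding_iff_eraseLast (mem_insert_of_mem (mem_erase.2 ⟨hDB, hD⟩))
    (ne_singleton_succ_of_mem_parts hD), eraseLast_extendBlock, erase_succ_of_mem_parts hD,
    part_succ_extendBlock, blockMin_insert_succ hB, exists_lt_blockMin_extendBlock_iff]

noncomputable def activeAv (P : SP n) : Finset (Finset ℕ) := {B ∈ P.parts | ExtendsAvoiding P B}

lemma activeAv_addSingleton : activeAv (addSingleton P) = insert {n + 1} (activeAv P) := by
  ext D
  simp only [activeAv, mem_filter, mem_insert, parts_addSingleton]
  constructor
  · rintro ⟨rfl | hD, hE⟩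
    · exact Or.inl rfl
    · exact Or.inr ⟨hD, (extendsAvoiding_addSingleton hD).1 hE⟩
  · rintro (rfl | ⟨hD, hE⟩)
    · refine ⟨Or.inl rfl, ?_⟩
      rintro ⟨-, -, C, hC, -, b, c, -, -, -, hb, hc, -, hbc, -⟩
      rw [mem_singleton] at hb
      have := le_of_mem_part hC hc
      omega
    · exact ⟨Or.inr hD, (extendsAvoiding_addSingleton hD).2 hE⟩

lemma card_activeAv_addSingleton : #(activeAv (addSingleton P)) = #(activeAv P) + 1 := by
  rw [activeAv_addSingleton, card_insert_of_notMem]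
  exact fun h => ne_singleton_succ_of_mem_parts (mem_filter.1 h).1 rfl

lemma activeAv_extendBlock (hB : B ∈ P.parts) (hBa : ExtendsAvoiding P B) {T : Finset ℕ}
    (hT : T ∈ P.parts) (hTmax : ∀ D ∈ P.parts, blockMin D ≤ blockMin T) :
    activeAv (extendBlock P B hB) = insert (insert (n + 1) B)
      {D ∈ activeAv P | D ≠ B ∧ (blockMin D < blockMin B ∨ D = T)} := by
  have hsurvive : ∀ D ∈ P.parts, D ≠ B →
      (¬(blockMin B < blockMin D ∧ ∃ C ∈ P.parts, blockMin D < blockMin C) ↔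
        blockMin D < blockMin B ∨ D = T) := by
    intro D hD hDB
    have hne : blockMin D ≠ blockMin B := fun h => hDB (blockMin_injOn P hD hB h)
    constructor
    · intro h
      by_contra! hc
      exact h ⟨by omega, T, hT, (hTmax D hD).lt_of_ne fun h' => hc.2 (blockMin_injOn P hD hT h')⟩
    · rintro (h | rfl) ⟨h₁, C, hC, h₂⟩
      · omega
      · exact absurd (hTmax C hC) (by omega)
  ext D
  simp only [activeAv, mem_filter, mem_insert, parts_extendBlock, mem_erase]
  constructor
  · rintro ⟨rfl | ⟨hDB, hD⟩, hE⟩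
    · exact Or.inl rfl
    · obtain ⟨hE, hor⟩ := (extendsAvoiding_extendBlock_of_ne hB hD hDB).1 hE
      exact Or.inr ⟨⟨hD, hE⟩, hDB, (hsurvive D hD hDB).1 hor⟩
  · rintro (rfl | ⟨⟨hD, hE⟩, hDB, hor⟩)
    · exact ⟨Or.inl rfl, (extendsAvoiding_extendBlock_self hB).2 hBa⟩
    · exact ⟨Or.inr ⟨hDB, hD⟩,
        (extendsAvoiding_extendBlock_of_ne hB hD hDB).2 ⟨hE, (hsurvive D hD hDB).2 hor⟩⟩

lemma extendsAvoiding_of_forall_blockMin_le {T : Finset ℕ}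
    (hTmax : ∀ D ∈ P.parts, blockMin D ≤ blockMin T) : ExtendsAvoiding P T :=
  fun ⟨_, _, C, hC, _, _, _, _, _, _, _, _, _, _, _, _, _, hTC⟩ => absurd (hTmax C hC) (by omega)

lemma blockMin_injOn_activeAv (P : SP n) : Set.InjOn blockMin (activeAv P) :=
  (blockMin_injOn P).mono (filter_subset _ _)

lemma card_activeAv_extendBlock (hB : B ∈ activeAv P) :
    #(activeAv (extendBlock P B (mem_filter.1 hB).1)) = succLabel #(activeAv P)
      (some (rankEquiv _ blockMin (blockMin_injOn_activeAv P) ⟨B, hB⟩)) := by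
  obtain ⟨hBp, hBa⟩ := mem_filter.1 hB
  obtain ⟨T, hT, hTmax⟩ := exists_max_image P.parts blockMin ⟨B, hBp⟩
  rw [activeAv_extendBlock hBp hBa hT hTmax]
  refine card_insert_filter_eq_succLabel _ _ _ hB
    (mem_filter.2 ⟨hT, extendsAvoiding_of_forall_blockMin_le hTmax⟩)
    (fun D hD => hTmax D (mem_filter.1 hD).1) fun h => ?_
  exact succ_notMem_part (mem_filter.1 h).1 (mem_insert_self _ _)

lemma not_contains12312_zero (P : SP 0) : ¬ Contains12312 P := fun ⟨_, hB, _⟩ => by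
  have := one_le_of_mem_parts hB; omega

noncomputable def avoidingGrowth : PartitionGrowth where
  good P := ¬ Contains12312 P
  active := activeAv
  key := blockMin
  active_subset _ := filter_subset _ _
  key_injOn := blockMin_injOn_activeAv
  good_zero := not_contains12312_zero
  good_addSingleton _ := not_congr contains12312_addSingleton
  good_extendBlock _ _ hB := by
    rw [contains12312_extendBlock hB, not_or, activeAv, mem_filter, ExtendsAvoiding]
    simp [hB]
  card_active_addSingleton _ := card_activeAv_addSingleton
  card_active_extendBlock _ _ hB := card_activeAv_extendBlock hB

end Avoiding

/-- The number of 2-distant noncrossing partitions of `[n]` equals the number of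
12312-avoiding partitions of `[n]`. -/
theorem ncp_two_eq_avoiding_12312 (n : ℕ) :
    NCP 2 n = Set.ncard {P : SP n | Avoids12312 P} := by
  rw [NCP, ← Nat.card_coe_set_eq, ← Nat.card_coe_set_eq]
  calc Nat.card {P : SP n | dcr 2 P = 0}
      = Nat.card {P : SP n // TwoNoncrossing P} :=
        Nat.card_congr (Equiv.subtypeEquivRight fun _ => dcr_two_eq_zero_iff)
    _ = Nat.card {P : SP n // ¬ Contains12312 P} :=
        noncrossingGrowth.card_good_eq avoidingGrowth n
    _ = Nat.card {P : SP n | Avoids12312 P} :=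
        Nat.card_congr (Equiv.subtypeEquivRight fun _ => avoids12312_iff.symm)
end
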